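/- arXiv:1912.00427 — 6 statements merged into one kernel-verified Lean document; each statement's English description precedes it below -/
import Mathlib

section
/- Let Q be a quiver of type A_n (n ≥ 1) and let F be an alien set for Q. Then the poset P_{Q^F} associated to the quiver Q^F is a poset of type A; that is, P_{Q^F} is a finite connected poset containing none of R1, R2, R3, and R_{4,n} (for every n ≥ 0) as a peak-subposet. -/
/-! ## Relation-based poset notions -/

/-- `x` and `y` are incomparable with respect to the relation `le`. -/
def RIncomp {α : Type*} (le : α → α → Prop) (x y : α) : Prop := ¬ le x y ∧ ¬ le y x

/-- The strict relation associated to `le`. -/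
def RLt {α : Type*} (le : α → α → Prop) (x y : α) : Prop := le x y ∧ ¬ le y x

/-- `z` is a maximal element with respect to `le`. -/
def RIsMax {α : Type*} (le : α → α → Prop) (z : α) : Prop := ∀ x, le z x → le x z

/-- `z` is a minimal element with respect to `le`. -/
def RIsMin {α : Type*} (le : α → α → Prop) (z : α) : Prop := ∀ x, le x z → le z x

/-- The down-cone `D(a) = {x | x ≤ a}`. -/
def RDown {α : Type*} (le : α → α → Prop) (a : α) : Set α := {x | le x a}

/-- The comparability graph of the relation `le`: vertices are the elements,
edges join comparable distinct elements. -/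
def RCompGraph {α : Type*} (le : α → α → Prop) : SimpleGraph α where
  Adj x y := x ≠ y ∧ (le x y ∨ le y x)
  symm := ⟨fun x y h => ⟨Ne.symm h.1, h.2.symm⟩⟩
  loopless := ⟨fun x h => h.1 rfl⟩

/-- Connectedness of the comparability graph. -/
def RConnected {α : Type*} (le : α → α → Prop) : Prop := (RCompGraph le).Connected

/-- `P` contains `R1` as a peak-subposet: a maximal element `z` together with three
distinct pairwise incomparable elements strictly below `z`. -/
def ContainsR1 {α : Type*} (le : α → α → Prop) : Prop :=
  ∃ z a b c : α, RIsMax le z ∧ a ≠ b ∧ a ≠ c ∧ b ≠ c ∧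
    RIncomp le a b ∧ RIncomp le a c ∧ RIncomp le b c ∧
    RLt le a z ∧ RLt le b z ∧ RLt le c z

/-- `P` contains `R2` as a peak-subposet: distinct maximal `z ≠ z'` and elements
`y < x` with `x < z` and `x < z'`. -/
def ContainsR2 {α : Type*} (le : α → α → Prop) : Prop :=
  ∃ z z' y x : α, RIsMax le z ∧ RIsMax le z' ∧ z ≠ z' ∧
    RLt le y x ∧ RLt le x z ∧ RLt le x z'

/-- `P` contains `R3` as a peak-subposet: three distinct maximal elements with a
common strict lower bound. -/
def ContainsR3 {α : Type*} (le : α → α → Prop) : Prop :=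
  ∃ z₁ z₂ z₃ x : α, RIsMax le z₁ ∧ RIsMax le z₂ ∧ RIsMax le z₃ ∧
    z₁ ≠ z₂ ∧ z₁ ≠ z₃ ∧ z₂ ≠ z₃ ∧
    RLt le x z₁ ∧ RLt le x z₂ ∧ RLt le x z₃

/-- `P` contains the crown `R_{4,n}` as a peak-subposet (with `m = n + 2` maximal
elements `z i` and `m` pairwise incomparable elements `x i`, indices mod `m`). -/
def ContainsCrown {α : Type*} (le : α → α → Prop) (n : ℕ) : Prop :=
  ∃ z x : Fin (n + 2) → α,
    Function.Injective z ∧ Function.Injective x ∧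
    (∀ j, RIsMax le (z j)) ∧
    (∀ i j, x i ≠ z j) ∧
    (∀ i j, i ≠ j → RIncomp le (x i) (x j)) ∧
    (∀ i j, RLt le (x i) (z j) ↔ (j = i ∨ j = i - 1))

/-- A poset (given by its order relation `le`) is of type `A`: it is connected and
contains none of `R1`, `R2`, `R3` and the crowns `R_{4,n}` as a peak-subposet. -/
def IsTypeA {α : Type*} (le : α → α → Prop) : Prop :=
  RConnected le ∧ ¬ ContainsR1 le ∧ ¬ ContainsR2 le ∧ ¬ ContainsR3 le ∧
    ∀ n : ℕ, ¬ ContainsCrown le n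

/-- The set of neighbors of a maximal element `z`: maximal elements `z' ≠ z` whose
down-cone meets the down-cone of `z`. -/
def NeighborSet {α : Type*} (le : α → α → Prop) (z : α) : Set α :=
  {z' | RIsMax le z' ∧ z' ≠ z ∧ (RDown le z ∩ RDown le z').Nonempty}

/-! ## Quivers of type `A_n` and alien sets -/

/-- A quiver of type `A_n`: vertices `Fin n`, and for each pair of consecutive
vertices exactly one arrow joining them (in one of the two orientations), and no
other arrows. -/
structure TypeAQuiver (n : ℕ) where
  arr : Fin n → Fin n → Prop
  adjacent : ∀ x y : Fin n, arr x y → (y.val = x.val + 1 ∨ x.val = y.val + 1)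
  exactlyOne : ∀ x y : Fin n, y.val = x.val + 1 → (arr x y ↔ ¬ arr y x)

/-- `z` is a sink: no arrow starts at `z`. -/
def IsSinkQ {n : ℕ} (Q : TypeAQuiver n) (z : Fin n) : Prop := ∀ y, ¬ Q.arr z y

/-- `z` is a source: no arrow ends at `z`. -/
def IsSourceQ {n : ℕ} (Q : TypeAQuiver n) (z : Fin n) : Prop := ∀ y, ¬ Q.arr y z

/-- `Supp I(z)`: the set of vertices admitting a directed path to `z` in `Q`. -/
def SuppI {n : ℕ} (Q : TypeAQuiver n) (z : Fin n) : Set (Fin n) :=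
  {x | Relation.ReflTransGen Q.arr x z}

/-- The arrow relation of the quiver `Q^F` obtained from `Q` by adding the extra
arrows in `F` (an extra arrow is recorded as the pair (source, target)). -/
def QFarr {n : ℕ} (Q : TypeAQuiver n) (F : Set (Fin n × Fin n)) :
    Fin n → Fin n → Prop :=
  fun x y => Q.arr x y ∨ (x, y) ∈ F

/-- `F` is an alien set for the type `A_n` quiver `Q`. -/
structure IsAlienSet {n : ℕ} (Q : TypeAQuiver n) (F : Set (Fin n × Fin n)) : Prop where
  /-- (a) Source and target of each extra arrow lie in `Supp I(z)` for some sink `z`. -/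
  sameSupp : ∀ p ∈ F, ∃ z : Fin n, IsSinkQ Q z ∧ p.1 ∈ SuppI Q z ∧ p.2 ∈ SuppI Q z
  /-- (b) The target of an extra arrow is not a source of `Q`, unless it is extremal. -/
  targetNotSource : ∀ p ∈ F, IsSourceQ Q p.2 → (p.2.val = 0 ∨ p.2.val = n - 1)
  /-- (c) Each extra arrow is the unique directed path in `Q^F` from its source to
  its target: every such path is the single arrow itself. -/
  uniquePath : ∀ p ∈ F, ∀ l : List (Fin n),
    List.Chain (QFarr Q F) p.1 (l ++ [p.2]) → l = []
  /-- (d) `Q^F` is acyclic. -/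
  acyclic : ∀ x : Fin n, ¬ Relation.TransGen (QFarr Q F) x x

/-- The order relation of the poset `P_{Q^F}` associated to the acyclic quiver
`Q^F`: `x ≤ y` iff there is a (possibly trivial) directed path from `x` to `y`. -/
def leQF {n : ℕ} (Q : TypeAQuiver n) (F : Set (Fin n × Fin n)) :
    Fin n → Fin n → Prop :=
  Relation.ReflTransGen (QFarr Q F)

/-! A directed path in a quiver of type `A_n` never turns back, so a vertex from which two
distinct sinks can be reached is a source lying strictly between them, and vertices reaching
a sink `z` from the same side of `z` are comparable in `Q`. By (b) such an interior source
receives no alien arrow; together with (a) this shows that the maximal elements of `P_{Q^F}`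
are the sinks of `Q` and that `x ≤ z` for a sink `z` already holds in `Q`. Then `R1` would
put two incomparable elements on the same side of a sink, `R2` an element below a minimal
source, and `R3` three sinks on two sides of a vertex; in a crown `R_{4,n}`, the sources
`x_j` and `x_{j+1}` below the rightmost maximal element `z_j` both lie to its left, hence
are comparable, which two distinct sources cannot be. -/

open Relation

namespace TypeAQuiver

variable {n : ℕ} (Q : TypeAQuiver n)

lemma arr_or_arr_of_val_succ {x y : Fin n} (h : y.val = x.val + 1) :
    Q.arr x y ∨ Q.arr y x :=
  or_iff_not_imp_left.mpr fun hxy => by_contra fun hyx => hxy ((Q.exactlyOne x y h).mpr hyx)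

lemma not_arr_of_arr {x y : Fin n} (h : Q.arr x y) : ¬ Q.arr y x := by
  rcases Q.adjacent x y h with hs | hs
  · exact (Q.exactlyOne x y hs).mp h
  · exact fun h' => (Q.exactlyOne y x hs).mp h' h

/-- A directed path never turns back. -/
lemma val_le_of_arr_of_reflTransGen {a c b : Fin n} (hac : Q.arr a c)
    (hcb : ReflTransGen Q.arr c b) :
    (a.val < c.val → c.val ≤ b.val) ∧ (c.val < a.val → b.val ≤ c.val) := by
  induction hcb using ReflTransGen.head_induction_on generalizing a with
  | refl => omega
  | @head c d hcd _ ih =>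
    have hda : d.val ≠ a.val := fun e => Q.not_arr_of_arr hac (Fin.ext e ▸ hcd)
    have := ih hcd
    have := Q.adjacent a c hac
    have := Q.adjacent c d hcd
    omega

lemma exists_arr_toward {x y : Fin n} (h : ReflTransGen Q.arr x y) (hne : x ≠ y) :
    ∃ c, Q.arr x c ∧ (x.val < c.val ↔ x.val < y.val) := by
  obtain ⟨c, hxc, hcy⟩ := h.cases_head.resolve_left hne
  have := Q.val_le_of_arr_of_reflTransGen hxc hcy
  have := Q.adjacent x c hxc
  exact ⟨c, hxc, by omega⟩

lemma reflTransGen_of_between {a b t : Fin n} (hab : ReflTransGen Q.arr a b)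
    (ht : a.val ≤ t.val ∧ t.val ≤ b.val ∨ b.val ≤ t.val ∧ t.val ≤ a.val) :
    ReflTransGen Q.arr a t ∧ ReflTransGen Q.arr t b := by
  induction hab using ReflTransGen.head_induction_on with
  | refl =>
    obtain rfl : t = b := Fin.ext (by omega)
    exact ⟨.refl, .refl⟩
  | @head a c hac hcb ih =>
    by_cases hta : t = a
    · subst hta
      exact ⟨.refl, .head hac hcb⟩
    · have := Fin.val_ne_of_ne hta
      have := Q.adjacent a c hac
      obtain ⟨hct, htb⟩ := ih (by omega)
      exact ⟨.head hac hct, htb⟩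

lemma eq_of_isSink_of_reflTransGen {z y : Fin n} (hz : IsSinkQ Q z)
    (h : ReflTransGen Q.arr z y) : y = z := by
  rcases h.cases_head with h | ⟨c, hc, -⟩
  · exact h.symm
  · exact absurd hc (hz c)

lemma eq_of_isSource_of_reflTransGen {x s : Fin n} (hs : IsSourceQ Q s)
    (h : ReflTransGen Q.arr x s) : x = s := by
  rcases h.cases_tail with h | ⟨c, -, hc⟩
  · exact h.symm
  · exact absurd hc (hs c)

lemma comparable_of_same_side {a b z : Fin n} (ha : ReflTransGen Q.arr a z)
    (hb : ReflTransGen Q.arr b z)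
    (hside : a.val < z.val ∧ b.val < z.val ∨ z.val < a.val ∧ z.val < b.val) :
    ReflTransGen Q.arr a b ∨ ReflTransGen Q.arr b a := by
  rcases le_total a.val b.val with hab | hab
  · rcases hside with hside | hside
    · exact .inl (Q.reflTransGen_of_between ha (by omega)).1
    · exact .inr (Q.reflTransGen_of_between hb (by omega)).1
  · rcases hside with hside | hside
    · exact .inr (Q.reflTransGen_of_between hb (by omega)).1
    · exact .inl (Q.reflTransGen_of_between ha (by omega)).1

section TwoSinks

variable {Q} {x z z' : Fin n} (hz : IsSinkQ Q z) (hz' : IsSinkQ Q z') (hne : z ≠ z')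
  (h : ReflTransGen Q.arr x z) (h' : ReflTransGen Q.arr x z')
include hz hz' hne h h'

lemma sinks_on_opposite_sides :
    z.val < x.val ∧ x.val < z'.val ∨ z'.val < x.val ∧ x.val < z.val := by
  have := Fin.val_ne_of_ne hne
  by_contra hsides
  rcases (by omega : (x.val ≤ z.val ∧ z.val ≤ z'.val ∨ z'.val ≤ z.val ∧ z.val ≤ x.val) ∨
      (x.val ≤ z'.val ∧ z'.val ≤ z.val ∨ z.val ≤ z'.val ∧ z'.val ≤ x.val)) with hb | hb
  · exact hne (Q.eq_of_isSink_of_reflTransGen hz (Q.reflTransGen_of_between h' hb).2).symm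
  · exact hne (Q.eq_of_isSink_of_reflTransGen hz' (Q.reflTransGen_of_between h hb).2)

lemma isSource_of_reflTransGen_sinks : IsSourceQ Q x := by
  intro w hw
  have hsides := sinks_on_opposite_sides hz hz' hne h h'
  obtain ⟨c, hc, hcz⟩ := Q.exists_arr_toward h (Fin.ne_of_val_ne (by omega))
  obtain ⟨c', hc', hcz'⟩ := Q.exists_arr_toward h' (Fin.ne_of_val_ne (by omega))
  have := Q.adjacent w x hw
  have := Q.adjacent x c hc
  have := Q.adjacent x c' hc'
  rcases (by omega : w.val = c.val ∨ w.val = c'.val) with e | e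
  · exact Q.not_arr_of_arr hc (Fin.ext e ▸ hw)
  · exact Q.not_arr_of_arr hc' (Fin.ext e ▸ hw)

end TwoSinks

end TypeAQuiver

lemma leQF_of_reflTransGen {n : ℕ} {Q : TypeAQuiver n} {F : Set (Fin n × Fin n)} {x y : Fin n}
    (h : ReflTransGen Q.arr x y) : leQF Q F x y :=
  ReflTransGen.mono (fun _ _ => Or.inl) x y h

lemma rConnected_leQF {n : ℕ} (hn : 1 ≤ n) (Q : TypeAQuiver n) (F : Set (Fin n × Fin n)) :
    RConnected (leQF Q F) := by
  have hreach : ∀ (k : ℕ) (hk : k < n), (RCompGraph (leQF Q F)).Reachable ⟨0, hn⟩ ⟨k, hk⟩ := by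
    intro k
    induction k with
    | zero => exact fun _ => .refl _
    | succ k ih =>
      intro hk
      refine (ih (by omega)).trans (SimpleGraph.Adj.reachable ⟨fun e => ?_, ?_⟩)
      · simp [Fin.ext_iff] at e
      · exact (Q.arr_or_arr_of_val_succ rfl).imp (fun h => .single (Or.inl h))
          (fun h => .single (Or.inl h))
  exact (SimpleGraph.connected_iff _).mpr
    ⟨fun x y => (hreach x x.isLt).symm.trans (hreach y y.isLt), ⟨⟨0, hn⟩⟩⟩

namespace IsAlienSet

variable {n : ℕ} {Q : TypeAQuiver n} {F : Set (Fin n × Fin n)} (hF : IsAlienSet Q F)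
include hF

lemma not_qFarr_of_reflTransGen_sinks {w x z z' : Fin n} (hz : IsSinkQ Q z)
    (hz' : IsSinkQ Q z') (hne : z ≠ z') (h : ReflTransGen Q.arr x z)
    (h' : ReflTransGen Q.arr x z') : ¬ QFarr Q F w x := by
  have hsides := TypeAQuiver.sinks_on_opposite_sides hz hz' hne h h'
  have hsrc := TypeAQuiver.isSource_of_reflTransGen_sinks hz hz' hne h h'
  rintro (hw | hw)
  · exact hsrc w hw
  · have hext : x.val = 0 ∨ x.val = n - 1 := hF.targetNotSource _ hw hsrc
    have := z.isLt
    have := z'.isLt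
    omega

lemma reflTransGen_of_leQF_of_isSink {x z : Fin n} (h : leQF Q F x z) (hz : IsSinkQ Q z) :
    ReflTransGen Q.arr x z := by
  induction h using ReflTransGen.head_induction_on with
  | refl => exact .refl
  | @head a c hac _ ih =>
    rcases hac with hac | hac
    · exact .head hac ih
    · obtain ⟨z', hz', haz', hcz'⟩ := hF.sameSupp _ hac
      obtain rfl : z = z' := by
        by_contra hne
        exact hF.not_qFarr_of_reflTransGen_sinks hz hz' hne ih hcz' (Or.inr hac)
      exact haz'

lemma isMax_iff_isSink {z : Fin n} : RIsMax (leQF Q F) z ↔ IsSinkQ Q z := by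
  constructor
  · intro hmax c hc
    exact hF.acyclic z (TransGen.head' (Or.inl hc) (hmax c (.single (Or.inl hc))))
  · intro hz x hzx
    rcases hzx.cases_head with rfl | ⟨c, hc | hc, -⟩
    · exact .refl
    · exact absurd hc (hz c)
    · obtain ⟨z', hz', hzz', hcz'⟩ := hF.sameSupp _ hc
      obtain rfl := Q.eq_of_isSink_of_reflTransGen hz hzz'
      exact (hF.acyclic _
        (TransGen.head' (r := QFarr Q F) (Or.inr hc) (leQF_of_reflTransGen hcz'))).elim

lemma isSink_and_reflTransGen_of_rLt {x z : Fin n} (hz : RIsMax (leQF Q F) z)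
    (h : RLt (leQF Q F) x z) : IsSinkQ Q z ∧ ReflTransGen Q.arr x z :=
  have hz := hF.isMax_iff_isSink.mp hz
  ⟨hz, hF.reflTransGen_of_leQF_of_isSink h.1 hz⟩

lemma not_containsR1 : ¬ ContainsR1 (leQF Q F) := by
  rintro ⟨z, a, b, c, hmax, -, -, -, hab, hac, hbc, ha, hb, hc⟩
  have opposite_sides : ∀ {p q}, RIncomp (leQF Q F) p q → RLt (leQF Q F) p z →
      RLt (leQF Q F) q z → p.val < z.val ∧ z.val < q.val ∨ q.val < z.val ∧ z.val < p.val := by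
    intro p q hpq hp hq
    have hpz := (hF.isSink_and_reflTransGen_of_rLt hmax hp).2
    have hqz := (hF.isSink_and_reflTransGen_of_rLt hmax hq).2
    have hp' : p.val ≠ z.val := fun e => hp.2 (Fin.ext e ▸ .refl)
    have hq' : q.val ≠ z.val := fun e => hq.2 (Fin.ext e ▸ .refl)
    by_contra hsides
    rcases Q.comparable_of_same_side hpz hqz (by omega) with hle | hle
    · exact hpq.1 (leQF_of_reflTransGen hle)
    · exact hpq.2 (leQF_of_reflTransGen hle)
  have := opposite_sides hab ha hb
  have := opposite_sides hac ha hc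
  have := opposite_sides hbc hb hc
  omega

lemma not_containsR2 : ¬ ContainsR2 (leQF Q F) := by
  rintro ⟨z, z', y, x, hmax, hmax', hne, hyx, hxz, hxz'⟩
  obtain ⟨hz, h⟩ := hF.isSink_and_reflTransGen_of_rLt hmax hxz
  obtain ⟨hz', h'⟩ := hF.isSink_and_reflTransGen_of_rLt hmax' hxz'
  obtain ⟨c, -, hcx⟩ := hyx.1.cases_tail.resolve_left fun e => hyx.2 (e ▸ .refl)
  exact hF.not_qFarr_of_reflTransGen_sinks hz hz' hne h h' hcx

lemma not_containsR3 : ¬ ContainsR3 (leQF Q F) := by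
  rintro ⟨z₁, z₂, z₃, x, hmax₁, hmax₂, hmax₃, h₁₂, h₁₃, h₂₃, hx₁, hx₂, hx₃⟩
  obtain ⟨hz₁, h₁⟩ := hF.isSink_and_reflTransGen_of_rLt hmax₁ hx₁
  obtain ⟨hz₂, h₂⟩ := hF.isSink_and_reflTransGen_of_rLt hmax₂ hx₂
  obtain ⟨hz₃, h₃⟩ := hF.isSink_and_reflTransGen_of_rLt hmax₃ hx₃
  have := TypeAQuiver.sinks_on_opposite_sides hz₁ hz₂ h₁₂ h₁ h₂
  have := TypeAQuiver.sinks_on_opposite_sides hz₁ hz₃ h₁₃ h₁ h₃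
  have := TypeAQuiver.sinks_on_opposite_sides hz₂ hz₃ h₂₃ h₂ h₃
  omega

lemma not_containsCrown (m : ℕ) : ¬ ContainsCrown (leQF Q F) m := by
  rintro ⟨z, x, hz_inj, hx_inj, hmax, -, -, hlt⟩
  have hsink (j : Fin (m + 2)) : IsSinkQ Q (z j) := hF.isMax_iff_isSink.mp (hmax j)
  have hpath (i j : Fin (m + 2)) (hij : j = i ∨ j = i - 1) : ReflTransGen Q.arr (x i) (z j) :=
    hF.reflTransGen_of_leQF_of_isSink ((hlt i j).mpr hij).1 (hsink j)
  have hne (i : Fin (m + 2)) : z i ≠ z (i - 1) :=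
    hz_inj.ne fun e => one_ne_zero (sub_eq_self.mp e.symm)
  have hsides (i : Fin (m + 2)) := TypeAQuiver.sinks_on_opposite_sides (hsink i)
    (hsink (i - 1)) (hne i) (hpath i i (.inl rfl)) (hpath i (i - 1) (.inr rfl))
  have hsrc (i : Fin (m + 2)) : IsSourceQ Q (x i) :=
    TypeAQuiver.isSource_of_reflTransGen_sinks (hsink i) (hsink (i - 1)) (hne i)
      (hpath i i (.inl rfl)) (hpath i (i - 1) (.inr rfl))
  obtain ⟨j, hj⟩ := Finite.exists_max fun k => (z k).val
  have hj_sub : j + 1 - 1 = j := add_sub_cancel_right j 1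
  have hx_left : (x j).val < (z j).val ∧ (x (j + 1)).val < (z j).val := by
    have h₁ := hsides j
    have h₂ := hsides (j + 1)
    have hne₂ := Fin.val_ne_of_ne (hne (j + 1))
    rw [hj_sub] at h₂ hne₂
    have := hj (j - 1)
    have := hj (j + 1)
    have := Fin.val_ne_of_ne (hne j)
    omega
  have hx_ne : x j ≠ x (j + 1) := hx_inj.ne fun e => one_ne_zero (add_eq_left.mp e.symm)
  rcases Q.comparable_of_same_side (hpath j j (.inl rfl)) (hpath (j + 1) j (.inr hj_sub.symm))
    (.inl hx_left) with hle | hle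
  · exact hx_ne (Q.eq_of_isSource_of_reflTransGen (hsrc _) hle)
  · exact hx_ne (Q.eq_of_isSource_of_reflTransGen (hsrc _) hle).symm

end IsAlienSet

/-- The poset associated to `Q^F`, where `Q` is a quiver of type
`A_n` (`n ≥ 1`) and `F` is an alien set for `Q`, is a poset of type `A`. -/
theorem poset_of_typeA_quiver_with_alien_set_is_typeA {n : ℕ} (hn : 1 ≤ n)
    (Q : TypeAQuiver n) (F : Set (Fin n × Fin n)) (hF : IsAlienSet Q F) :
    IsTypeA (leQF Q F) :=
  ⟨rConnected_leQF hn Q F, hF.not_containsR1, hF.not_containsR2, hF.not_containsR3,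
    hF.not_containsCrown⟩
end

section
/- Let P be a poset of type A with n elements. Then there exist a quiver Q of type A_n and an alien set F for Q such that P is order-isomorphic to the poset P_{Q^F} associated to the quiver Q^F. -/
/-!
The maximal elements ("peaks") of a type `A` poset, two of them adjacent when their down-cones
meet, form a path `z₁, …, z_k`: `R1`–`R3` bound the degrees, the crowns forbid cycles, and
connectedness makes the path pass through every peak. Adjacent cones meet in a single element
`wᵢ`, which is minimal, and other cones are disjoint. Below a peak there is no antichain of size
three (`R1`), so by Dilworth's theorem each cone minus its peak is the union of two chains.
Listing `P` up one chain of the first cone to `z₁`, down the other to `w₁`, up to `z₂`, and so on,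
consecutive elements are comparable; orienting each edge upwards gives `Q`, and the covering
relations that are not arrows of `Q` form the alien set `F`: each lies inside one cone, hence in
`Supp I(zᵢ)`, and its target is not an interior source of `Q`, as those are the minimal `wᵢ`.
-/

open Relation

section Chains

variable {P : Type*} [PartialOrder P]

theorem Finset.exists_pairwise_lt_of_isChain {s : Finset P} (hs : IsChain (· ≤ ·) (s : Set P)) :
    ∃ l : List P, l.Pairwise (· < ·) ∧ ∀ x, x ∈ l ↔ x ∈ s := by
  classical
  -- sorting by a strictly monotone key puts a chain in increasing order
  let height (x : P) : ℕ := (s.filter (· < x)).card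
  have hheight : ∀ {a b}, a ∈ s → a < b → height a < height b := by
    intro a b ha hab
    refine Finset.card_lt_card ((Finset.ssubset_iff_of_subset fun x hx ↦ ?_).mpr ⟨a, ?_, ?_⟩)
    · simp only [Finset.mem_filter] at hx ⊢; exact ⟨hx.1, hx.2.trans hab⟩
    · simpa using ⟨ha, hab⟩
    · simp
  let l := s.toList.mergeSort fun a b ↦ decide (height a ≤ height b)
  have hmem : ∀ x, x ∈ l ↔ x ∈ s := fun x ↦ by simp [l, List.mem_mergeSort]
  have hle : l.Pairwise fun a b ↦ decide (height a ≤ height b) := List.pairwise_mergeSort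
    (fun _ _ _ h₁ h₂ ↦ by simp only [decide_eq_true_eq] at *; omega) (fun a b ↦ by simp; omega) _
  have hnd : l.Nodup := (List.mergeSort_perm _ _).nodup_iff.mpr s.nodup_toList
  refine ⟨l, (hle.and hnd).imp_of_mem fun ha hb ⟨hab, hne⟩ ↦ ?_, hmem⟩
  rcases hs ((hmem _).mp ha) ((hmem _).mp hb) hne with h | h
  · exact h.lt_of_ne hne
  · simp only [decide_eq_true_eq] at hab
    exact absurd hab (not_le.mpr (hheight ((hmem _).mp hb) (h.lt_of_ne hne.symm)))

theorem List.Pairwise.head?_eq_of_isMin {l : List P} (hl : l.Pairwise (· < ·)) {w : P}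
    (hw : w ∈ l) (hmin : IsMin w) : l.head? = some w := by
  cases l with
  | nil => simp at hw
  | cons a t =>
    rcases List.mem_cons.mp hw with rfl | hw
    · rfl
    · exact absurd ((List.pairwise_cons.mp hl).1 w hw) hmin.not_lt

theorem Finset.exists_forall_le_of_isChain {s : Finset P} (hs : IsChain (· ≤ ·) (s : Set P))
    (hne : s.Nonempty) : ∃ c ∈ s, ∀ x ∈ s, x ≤ c := by
  obtain ⟨c, hc, hmax⟩ := s.exists_maximal hne
  refine ⟨c, hc, fun x hx ↦ ?_⟩
  rcases eq_or_ne x c with rfl | hxc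
  · rfl
  · exact (hs hx hc hxc).elim id (hmax hx)

theorem Finset.mem_of_incompRel [DecidableEq P] {S E F : Finset P} (hEF : E ∪ F = S)
    (hE : IsChain (· ≤ ·) (E : Set P)) {x y : P} (hx : x ∈ E) (hy : y ∈ S)
    (hxy : IncompRel (· ≤ ·) x y) : y ∈ F :=
  (Finset.mem_union.mp (hEF ▸ hy)).resolve_left fun hyE ↦ (hE hx hyE hxy.ne).elim hxy.1 hxy.2

theorem Finset.exists_top_of_incompRel {S E : Finset P} (hE : IsChain (· ≤ ·) (E : Set P))
    {x y : P} (hx : x ∈ E) (hy : y ∈ S) (hxy : IncompRel (· ≤ ·) x y) :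
    ∃ c ∈ E, (∃ y ∈ S, IncompRel (· ≤ ·) c y) ∧
      ∀ x ∈ E, (∃ y ∈ S, IncompRel (· ≤ ·) x y) → x ≤ c := by
  classical
  obtain ⟨c, hc, hle⟩ := Finset.exists_forall_le_of_isChain
    (hE.mono (Finset.coe_subset.mpr (Finset.filter_subset _ _)))
    (s := E.filter fun x ↦ ∃ y ∈ S, IncompRel (· ≤ ·) x y) ⟨x, by simpa using ⟨hx, y, hy, hxy⟩⟩
  rw [Finset.mem_filter] at hc
  exact ⟨c, hc.1, hc.2, fun x hx hinc ↦ hle x (Finset.mem_filter.mpr ⟨hx, hinc⟩)⟩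

theorem Finset.exists_isChain_isChain_sdiff_of_le [DecidableEq P] {S C D : Finset P} {a c : P}
    (ha : a ∈ S) (hCD : C ∪ D = S.erase a) (hC : IsChain (· ≤ ·) (C : Set P))
    (hD : IsChain (· ≤ ·) (D : Set P)) (hca : c ≤ a)
    (hc : ∀ x ∈ C, (∃ y ∈ S.erase a, IncompRel (· ≤ ·) x y) → x ≤ c) :
    ∃ K ⊆ S, IsChain (· ≤ ·) (K : Set P) ∧ IsChain (· ≤ ·) ((S \ K : Finset P) : Set P) := by
  classical
  have hCS : C ⊆ S.erase a := hCD ▸ Finset.subset_union_left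
  have hcomp : ∀ x ∈ C, ¬ x ≤ c → ∀ y ∈ S.erase a, x ≤ y ∨ y ≤ x := fun x hx hxc y hy ↦
    not_not.mp fun h ↦ hxc (hc x hx ⟨y, hy, not_or.mp h⟩)
  refine ⟨insert a (C.filter (· ≤ c)), Finset.insert_subset ha
    (Finset.filter_subset _ _ |>.trans (hCS.trans (Finset.erase_subset _ _))), ?_, ?_⟩
  · rw [Finset.coe_insert]
    refine (hC.mono (Finset.coe_subset.mpr (Finset.filter_subset _ _))).insert
      fun b hb _ ↦ Or.inr ?_
    exact (Finset.mem_filter.mp hb).2.trans hca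
  · intro u hu v hv huv
    simp only [Finset.coe_sdiff, Finset.coe_insert, Set.mem_sdiff, Set.mem_insert_iff,
      Finset.mem_coe, Finset.mem_filter, not_or, not_and] at hu hv
    have hu' : u ∈ S.erase a := Finset.mem_erase.mpr ⟨hu.2.1, hu.1⟩
    have hv' : v ∈ S.erase a := Finset.mem_erase.mpr ⟨hv.2.1, hv.1⟩
    by_cases huC : u ∈ C
    · exact hcomp u huC (hu.2.2 huC) v hv'
    by_cases hvC : v ∈ C
    · exact (hcomp v hvC (hv.2.2 hvC) u hu').symm
    have hDmem : ∀ x ∈ S.erase a, x ∉ C → x ∈ D := fun x hx hxC ↦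
      (Finset.mem_union.mp (hCD ▸ hx)).resolve_left hxC
    exact hD (hDmem u hu' huC) (hDmem v hv' hvC) huv

/-- Dilworth's theorem for width two, by Galvin's argument. -/
theorem Finset.exists_isChain_isChain_sdiff [DecidableEq P] (S : Finset P)
    (hS : ∀ a ∈ S, ∀ b ∈ S, ∀ c ∈ S, IncompRel (· ≤ ·) a b → IncompRel (· ≤ ·) a c →
      IncompRel (· ≤ ·) b c → False) :
    ∃ C ⊆ S, IsChain (· ≤ ·) (C : Set P) ∧ IsChain (· ≤ ·) ((S \ C : Finset P) : Set P) := by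
  induction S using Finset.strongInduction with | H S ih =>
  obtain rfl | ⟨a, ha, hmax⟩ := S.eq_empty_or_nonempty.imp_right S.exists_maximal
  · exact ⟨∅, subset_rfl, by simp, by simp⟩
  obtain ⟨C, hCS, hC, hD⟩ := ih (S.erase a) (Finset.erase_ssubset ha) fun x hx y hy z hz ↦
    hS x (Finset.mem_of_mem_erase hx) y (Finset.mem_of_mem_erase hy) z (Finset.mem_of_mem_erase hz)
  by_cases hchain : IsChain (· ≤ ·) (S.erase a : Set P)
  · exact ⟨S.erase a, Finset.erase_subset _ _, hchain, by simp [Finset.sdiff_erase_self ha]⟩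
  obtain ⟨u, hu, v, hv, huv⟩ : ∃ u ∈ S.erase a, ∃ v ∈ S.erase a, IncompRel (· ≤ ·) u v := by
    simp only [IsChain, Set.Pairwise, not_forall] at hchain
    obtain ⟨u, hu, v, hv, _, h⟩ := hchain
    exact ⟨u, hu, v, hv, not_or.mp h⟩
  have hCD : C ∪ (S.erase a \ C) = S.erase a := Finset.union_sdiff_of_subset hCS
  have hDC : (S.erase a \ C) ∪ C = S.erase a := Finset.sdiff_union_of_subset hCS
  obtain ⟨c₀, hc₀, d₀, hd₀, hcd₀⟩ : ∃ c₀ ∈ C, ∃ d₀ ∈ S.erase a \ C, IncompRel (· ≤ ·) c₀ d₀ := by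
    rcases Finset.mem_union.mp (hCD ▸ hu) with huC | huD
    · exact ⟨u, huC, v, Finset.mem_of_incompRel hCD hC huC hv huv, huv⟩
    · exact ⟨v, Finset.mem_of_incompRel hDC hD huD hv huv, u, huD, huv.symm⟩
  -- the tops `c`, `d` of the parts of the two chains not comparable to everything are
  -- incomparable, so the maximal `a` lies above one of them
  obtain ⟨c, hcC, ⟨y, hy, hcy⟩, hc⟩ :=
    Finset.exists_top_of_incompRel hC hc₀ (Finset.sdiff_subset hd₀) hcd₀
  obtain ⟨d, hdD, ⟨z, hz, hdz⟩, hd⟩ := Finset.exists_top_of_incompRel hD hd₀ (hCS hc₀) hcd₀.symm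
  have hyd : y ≤ d := hd y (Finset.mem_of_incompRel hCD hC hcC hy hcy) ⟨c, hCS hcC, hcy.symm⟩
  have hzc : z ≤ c :=
    hc z (Finset.mem_of_incompRel hDC hD hdD hz hdz) ⟨d, Finset.sdiff_subset hdD, hdz.symm⟩
  have hnot : ∀ x ∈ S.erase a, ¬ a ≤ x := fun x hx h ↦
    (Finset.mem_erase.mp hx).1 ((hmax (Finset.mem_of_mem_erase hx) h).antisymm h)
  by_cases hca : c ≤ a
  · exact Finset.exists_isChain_isChain_sdiff_of_le ha hCD hC hD hca hc
  by_cases hda : d ≤ a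
  · exact Finset.exists_isChain_isChain_sdiff_of_le ha hDC hD hC hda hd
  exact (hS a ha c (Finset.mem_of_mem_erase (hCS hcC)) d
    (Finset.mem_of_mem_erase (Finset.sdiff_subset hdD)) ⟨hnot c (hCS hcC), hca⟩
    ⟨hnot d (Finset.sdiff_subset hdD), hda⟩
    ⟨fun h ↦ hdz.2 (hzc.trans h), fun h ↦ hcy.2 (hyd.trans h)⟩).elim

theorem Finset.exists_isChain_isChain_sdiff_mem [DecidableEq P] (S : Finset P)
    (hS : ∀ a ∈ S, ∀ b ∈ S, ∀ c ∈ S, IncompRel (· ≤ ·) a b → IncompRel (· ≤ ·) a c →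
      IncompRel (· ≤ ·) b c → False)
    (a b : Option P) (ha : ∀ w ∈ a, w ∈ S)
    (hab : ∀ w ∈ a, ∀ w' ∈ b, IncompRel (· ≤ ·) w w') :
    ∃ C ⊆ S, IsChain (· ≤ ·) (C : Set P) ∧ IsChain (· ≤ ·) ((S \ C : Finset P) : Set P) ∧
      (∀ w ∈ a, w ∈ C) ∧ ∀ w ∈ b, w ∉ C := by
  obtain ⟨C, hCS, hC, hD⟩ := S.exists_isChain_isChain_sdiff hS
  by_cases hgood : (∀ w ∈ a, w ∈ C) ∧ ∀ w ∈ b, w ∉ C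
  · exact ⟨C, hCS, hC, hD, hgood⟩
  have hsame : ∀ {E : Finset P}, IsChain (· ≤ ·) (E : Set P) → ∀ w ∈ a, ∀ w' ∈ b, w ∈ E →
      w' ∈ E → False := fun hE w hw w' hw' h h' ↦
    (hE h h' (hab w hw w' hw').ne).elim (hab w hw w' hw').1 (hab w hw w' hw').2
  refine ⟨S \ C, Finset.sdiff_subset, hD, by rwa [Finset.sdiff_sdiff_eq_self hCS], ?_, ?_⟩
  · intro w hw
    refine Finset.mem_sdiff.mpr ⟨ha w hw, fun hwC ↦ hgood ⟨?_, fun w' hw' hw'C ↦ ?_⟩⟩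
    · intro v hv; rwa [Option.mem_unique hv hw]
    · exact hsame hC w hw w' hw' hwC hw'C
  · intro w' hw' hw'D
    refine hgood ⟨fun w hw ↦ ?_, fun v hv hvC ↦ (Finset.mem_sdiff.mp hw'D).2 ?_⟩
    · by_contra hwC
      exact hsame hD w hw w' hw' (Finset.mem_sdiff.mpr ⟨ha w hw, hwC⟩) hw'D
    · rwa [Option.mem_unique hv hw'] at hvC

end Chains

namespace List

theorem pair_infix_reverse {α : Type*} {a b : α} {L : List α} :
    [a, b] <:+: L.reverse ↔ [b, a] <:+: L := by
  simpa using reverse_infix (l₁ := [b, a]) (l₂ := L)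

theorem pair_infix_getElem_iff {α : Type*} {L : List α} (hL : L.Nodup) {i j : ℕ}
    (hi : i < L.length) (hj : j < L.length) : [L[i], L[j]] <:+: L ↔ j = i + 1 := by
  rw [infix_iff_getElem?]
  constructor
  · rintro ⟨k, hk, h⟩
    have h₀ := h 0 (by simp)
    have h₁ := h 1 (by simp)
    simp only [zero_add, getElem_cons_zero, getElem_cons_succ, getElem?_eq_some_iff] at h₀ h₁
    obtain ⟨_, h₀⟩ := h₀
    obtain ⟨_, h₁⟩ := h₁
    rw [hL.getElem_inj_iff] at h₀ h₁
    omega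
  · rintro rfl
    refine ⟨i, by simp only [length_cons, length_nil]; omega, fun t ht ↦ ?_⟩
    match t, ht with
    | 0, _ => simp [hi]
    | 1, _ => simp [hj, add_comm]

variable {P : Type*} [PartialOrder P] {L L' : List P} {a b y z : P}

def Rise (L : List P) (a b : P) : Prop := a < b ∧ ([a, b] <:+: L ∨ [b, a] <:+: L)

theorem Rise.lt (h : L.Rise a b) : a < b := h.1

theorem Rise.mono (hL : L <:+: L') (h : L.Rise a b) : L'.Rise a b :=
  ⟨h.1, h.2.imp (·.trans hL) (·.trans hL)⟩

theorem reflTransGen_rise_mono (hL : L <:+: L') (h : ReflTransGen L.Rise a b) :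
    ReflTransGen L'.Rise a b :=
  ReflTransGen.mono (fun _ _ ↦ Rise.mono hL) _ _ h

@[simp] theorem rise_reverse : L.reverse.Rise = L.Rise := by
  ext a b
  simp only [Rise, pair_infix_reverse, or_comm]

theorem reflTransGen_rise_of_isChain :
    ∀ {l : List P}, (l ++ [z]).IsChain (· < ·) → ∀ x ∈ l ++ [z], ReflTransGen (l ++ [z]).Rise x z
  | [], _, x, hx => by simp only [nil_append, mem_singleton] at hx; exact hx ▸ .refl
  | c :: l, h, x, hx => by
    have lift : ∀ y ∈ l ++ [z], ReflTransGen (c :: l ++ [z]).Rise y z := fun y hy ↦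
      reflTransGen_rise_mono (infix_cons infix_rfl) (reflTransGen_rise_of_isChain h.tail y hy)
    rcases mem_cons.mp hx with rfl | hx
    · obtain ⟨d, t, hd⟩ : ∃ d t, l ++ [z] = d :: t := ⟨_, _, (cons_head_tail (by simp)).symm⟩
      rw [cons_append, hd, isChain_cons_cons] at h
      exact .head ⟨h.1, Or.inl ⟨[], t, by simp [hd]⟩⟩ (lift d (by simp [hd]))
    · exact lift x hx

theorem head?_eq_or_exists_rise : ∀ {l : List P}, l.IsChain (· < ·) → y ∈ l →
    l.head? = some y ∨ ∃ x, l.Rise x y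
  | [], _, hy => absurd hy (not_mem_nil)
  | [c], _, hy => Or.inl (by rw [mem_singleton.mp hy]; rfl)
  | c :: d :: l, h, hy => by
    rw [isChain_cons_cons] at h
    rcases mem_cons.mp hy with rfl | hy
    · exact Or.inl rfl
    · right
      rcases head?_eq_or_exists_rise h.2 hy with hd | ⟨x, hx⟩
      · obtain rfl : d = y := by simpa using hd
        exact ⟨c, h.1, Or.inl ⟨[], l, rfl⟩⟩
      · exact ⟨x, hx.mono (infix_cons infix_rfl)⟩

end List

section Layout

open List

variable {P : Type*} [PartialOrder P]

/-- A layout of `P` lists its elements in the order of the vertices `1, …, n` of `A_n`; the edge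
between neighbours is oriented upwards in `P`, so the arrows of `Q` are the rises `List.Rise`, and
the covering relations that are not rises are the alien arrows. `isMin_or_end_or_rise` says that
interior sources of `Q` are minimal, and `covBy` that both ends of a covering relation reach a
common vertex, hence a common sink. -/
structure IsLayout (L : List P) : Prop where
  nodup : L.Nodup
  isChain : L.IsChain fun a b ↦ a < b ∨ b < a
  isMin_or_end_or_rise : ∀ y ∈ L,
    IsMin y ∨ L.head? = some y ∨ L.getLast? = some y ∨ ∃ x, L.Rise x y
  covBy : ∀ x ∈ L, ∀ y ∈ L, x ⋖ y → ∃ z, ReflTransGen L.Rise x z ∧ ReflTransGen L.Rise y z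

theorem isLayout_mountain {u d : List P} {z : P} (hu : (u ++ [z]).IsChain (· < ·))
    (hd : (d ++ [z]).IsChain (· < ·)) (hnd : (u ++ z :: d.reverse).Nodup) :
    IsLayout (u ++ z :: d.reverse) := by
  have hsplit : u ++ z :: d.reverse = (u ++ [z]) ++ d.reverse := by simp
  have hup : u ++ [z] <:+: u ++ z :: d.reverse := hsplit ▸ infix_append_left
  have hdown : (d ++ [z]).reverse <:+: u ++ z :: d.reverse := by
    simpa using infix_append_right
  have hreach : ∀ x ∈ u ++ z :: d.reverse, ReflTransGen (u ++ z :: d.reverse).Rise x z := by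
    intro x hx
    rcases mem_append.mp (hsplit ▸ hx) with hx | hx
    · exact reflTransGen_rise_mono hup (reflTransGen_rise_of_isChain hu x hx)
    · refine reflTransGen_rise_mono hdown ?_
      rw [rise_reverse]
      exact reflTransGen_rise_of_isChain hd x (mem_append_left _ (mem_reverse.mp hx))
  refine ⟨hnd, ?_, fun y hy ↦ ?_, fun x hx y hy _ ↦ ⟨z, hreach x hx, hreach y hy⟩⟩
  · have hdown' : ([z] ++ d.reverse).IsChain fun a b ↦ a < b ∨ b < a := by
      simpa using isChain_reverse.mpr (hd.imp fun _ _ h ↦ Or.inr h)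
    simpa using (hu.imp fun _ _ h ↦ Or.inl h).append_overlap hdown' (cons_ne_nil _ _)
  · have hy' : y ∈ u ++ [z] ∨ y ∈ d ++ [z] := by
      simp only [mem_append, mem_cons, mem_reverse, not_mem_nil] at hy ⊢
      tauto
    rcases hy' with hy | hy
    · rcases head?_eq_or_exists_rise hu hy with h | ⟨x, hx⟩
      · exact Or.inr (Or.inl (by rw [hsplit, head?_append, h]; rfl))
      · exact Or.inr (Or.inr (Or.inr ⟨x, hx.mono hup⟩))
    · rcases head?_eq_or_exists_rise hd hy with h | ⟨x, hx⟩
      · refine Or.inr (Or.inr (Or.inl ?_))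
        rw [getLast?_eq_head?_reverse]; simpa [head?_append] using h
      · exact Or.inr (Or.inr (Or.inr ⟨x, Rise.mono hdown (by rwa [rise_reverse])⟩))

theorem mem_left_or_mem_right_of_le {U R : List P} {w x y : P}
    (hUR : ∀ x ∈ U, ∀ y ∈ R, IncompRel (· ≤ ·) x y) (hx : x ∈ U ++ w :: R)
    (hy : y ∈ U ++ w :: R) (hxy : x ≤ y) :
    (x ∈ U ++ [w] ∧ y ∈ U ++ [w]) ∨ (x ∈ w :: R ∧ y ∈ w :: R) := by
  have h₁ : x ∈ U → y ∉ R := fun hxU hyR ↦ (hUR x hxU y hyR).1 hxy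
  have h₂ : x ∈ R → y ∉ U := fun hxR hyU ↦ (hUR y hyU x hxR).2 hxy
  simp only [mem_append, mem_cons, not_mem_nil, or_false] at hx hy ⊢
  tauto

theorem IsLayout.append {U R : List P} {w : P} (hU : IsLayout (U ++ [w]))
    (hR : IsLayout (w :: R)) (hw : IsMin w)
    (hUR : ∀ x ∈ U, ∀ y ∈ R, IncompRel (· ≤ ·) x y) : IsLayout (U ++ w :: R) := by
  have hsplit : U ++ w :: R = (U ++ [w]) ++ R := by simp
  have hleft : U ++ [w] <:+: U ++ w :: R := hsplit ▸ infix_append_left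
  have hright : w :: R <:+: U ++ w :: R := infix_append_right
  refine ⟨?_, ?_, fun y hy ↦ ?_, fun x hx y hy hxy ↦ ?_⟩
  · rw [hsplit, nodup_append]
    refine ⟨hU.nodup, (nodup_cons.mp hR.nodup).2, fun x hx y hy hxy ↦ ?_⟩
    subst hxy
    rcases mem_append.mp hx with hx | hx
    · exact (hUR x hx x hy).1 le_rfl
    · exact (nodup_cons.mp hR.nodup).1 (mem_singleton.mp hx ▸ hy)
  · simpa using hU.isChain.append_overlap (l₃ := R) (by simpa using hR.isChain) (cons_ne_nil _ _)
  · rcases (mem_left_or_mem_right_of_le hUR hy hy le_rfl).imp And.left And.left with hy | hy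
    · rcases hU.isMin_or_end_or_rise y hy with h | h | h | ⟨x, hx⟩
      · exact Or.inl h
      · exact Or.inr (Or.inl (by rw [hsplit, head?_append, h]; rfl))
      · exact Or.inl ((by simpa using h : w = y) ▸ hw)
      · exact Or.inr (Or.inr (Or.inr ⟨x, hx.mono hleft⟩))
    · rcases hR.isMin_or_end_or_rise y hy with h | h | h | ⟨x, hx⟩
      · exact Or.inl h
      · exact Or.inl (Option.some.inj h ▸ hw)
      · exact Or.inr (Or.inr (Or.inl (by rw [getLast?_append, h]; rfl)))
      · exact Or.inr (Or.inr (Or.inr ⟨x, hx.mono hright⟩))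
  · rcases mem_left_or_mem_right_of_le hUR hx hy hxy.le with ⟨hx, hy⟩ | ⟨hx, hy⟩
    · obtain ⟨z, h₁, h₂⟩ := hU.covBy x hx y hy hxy
      exact ⟨z, reflTransGen_rise_mono hleft h₁, reflTransGen_rise_mono hleft h₂⟩
    · obtain ⟨z, h₁, h₂⟩ := hR.covBy x hx y hy hxy
      exact ⟨z, reflTransGen_rise_mono hright h₁, reflTransGen_rise_mono hright h₂⟩

end Layout

section Realization

open List

variable {P : Type*} [PartialOrder P] {L : List P}

theorem exists_reflTransGen_forall_not {α : Type*} [Finite α] [Preorder α] {r : α → α → Prop}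
    (hr : ∀ a b, r a b → a < b) (a : α) : ∃ b, ReflTransGen r a b ∧ ∀ c, ¬ r b c := by
  obtain ⟨b, hb⟩ := (Set.toFinite {b | ReflTransGen r a b}).exists_maximal ⟨a, .refl⟩
  exact ⟨b, hb.1, fun c hc ↦ (hr b c hc).not_ge (hb.2 (hb.1.tail hc) (hr b c hc).le)⟩

theorem List.Nodup.rise_getElem_iff (hL : L.Nodup) (i j : Fin L.length) :
    L.Rise L[i] L[j] ↔ (j.val = i.val + 1 ∨ i.val = j.val + 1) ∧ L[i] < L[j] := by
  simp only [Fin.getElem_fin]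
  rw [Rise, pair_infix_getElem_iff hL, pair_infix_getElem_iff hL, and_comm]

def IsLayout.quiver (hL : IsLayout L) : TypeAQuiver L.length where
  arr i j := L.Rise L[i] L[j]
  adjacent i j h := ((hL.nodup.rise_getElem_iff i j).mp h).1
  exactlyOne i j hij := by
    have hcomp := isChain_iff_getElem.mp hL.isChain i (by omega)
    simp only [← hij] at hcomp
    rw [hL.nodup.rise_getElem_iff, hL.nodup.rise_getElem_iff]
    constructor
    · exact fun h h' ↦ h.2.asymm h'.2
    · exact fun h ↦ ⟨Or.inl hij, hcomp.resolve_right fun h' ↦ h ⟨Or.inr hij, h'⟩⟩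

def IsLayout.alienArrows (hL : IsLayout L) : Set (Fin L.length × Fin L.length) :=
  {p | L[p.1] ⋖ L[p.2] ∧ ¬ hL.quiver.arr p.1 p.2}

theorem IsLayout.lt_of_qFarr (hL : IsLayout L) {a b : Fin L.length}
    (h : QFarr hL.quiver hL.alienArrows a b) : L[a] < L[b] :=
  h.elim (fun h ↦ h.1) fun h ↦ h.1.lt

theorem IsLayout.lt_of_transGen (hL : IsLayout L) {a b : Fin L.length}
    (h : TransGen (QFarr hL.quiver hL.alienArrows) a b) : L[a] < L[b] := by
  induction h with
  | single h => exact hL.lt_of_qFarr h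
  | tail _ h ih => exact ih.trans (hL.lt_of_qFarr h)

theorem IsLayout.le_of_leQF (hL : IsLayout L) {a b : Fin L.length}
    (h : leQF hL.quiver hL.alienArrows a b) : L[a] ≤ L[b] := by
  induction h with
  | refl => rfl
  | tail _ h ih => exact ih.trans (hL.lt_of_qFarr h).le

theorem IsLayout.qFarr_of_covBy (hL : IsLayout L) {a b : Fin L.length} (h : L[a] ⋖ L[b]) :
    QFarr hL.quiver hL.alienArrows a b :=
  (em (hL.quiver.arr a b)).elim Or.inl fun hq ↦ Or.inr ⟨h, hq⟩

theorem IsLayout.exists_alienSet (hL : IsLayout L) (hmem : ∀ x, x ∈ L) :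
    ∃ (Q : TypeAQuiver L.length) (F : Set (Fin L.length × Fin L.length)), IsAlienSet Q F ∧
      ∃ e : P ≃ Fin L.length, ∀ x y : P, x ≤ y ↔ leQF Q F (e x) (e y) := by
  classical
  set e : P ≃ Fin L.length := (hL.nodup.getEquivOfForallMemList L hmem).symm
  have he : ∀ x, L[e x] = x := (hL.nodup.getEquivOfForallMemList L hmem).apply_symm_apply
  have he' : ∀ i : Fin L.length, e L[(i : ℕ)] = i :=
    (hL.nodup.getEquivOfForallMemList L hmem).symm_apply_apply
  have : Finite P := Finite.of_surjective (fun i : Fin L.length ↦ L[i]) fun x ↦ ⟨e x, he x⟩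
  have : Fintype P := Fintype.ofFinite P
  have : LocallyFiniteOrder P := Fintype.toLocallyFiniteOrder
  have hlift : ∀ {x y}, ReflTransGen L.Rise x y → ReflTransGen hL.quiver.arr (e x) (e y) :=
    fun h ↦ ReflTransGen.lift e (fun a b hab ↦ show L.Rise L[e a] L[e b] by rwa [he, he]) _ _ h
  refine ⟨hL.quiver, hL.alienArrows, ⟨fun p hp ↦ ?sameSupp, fun p hp hsrc ↦ ?targetNotSource,
    fun p hp l hl ↦ ?uniquePath, fun i h ↦ (hL.lt_of_transGen h).false⟩, e,
    fun x y ↦ ⟨fun hxy ↦ ?_, fun h ↦ ?_⟩⟩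
  case sameSupp =>
    obtain ⟨z, hi, hj⟩ := hL.covBy _ (getElem_mem _) _ (getElem_mem _) hp.1
    obtain ⟨z', hzz', hsink⟩ := exists_reflTransGen_forall_not (fun _ _ (h : L.Rise _ _) ↦ h.lt) z
    refine ⟨e z', fun k hk ↦ hsink L[k] (by rwa [← he z']), ?_, ?_⟩
    · simpa [SuppI, he'] using hlift (hi.trans hzz')
    · simpa [SuppI, he'] using hlift (hj.trans hzz')
  case targetNotSource =>
    rcases hL.isMin_or_end_or_rise _ (getElem_mem p.2.isLt) with hmin | h | h | ⟨x, hx⟩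
    · exact absurd hp.1.lt hmin.not_lt
    · rw [head?_eq_getElem?, getElem?_eq_some_iff] at h
      exact Or.inl (hL.nodup.getElem_inj_iff.mp h.2).symm
    · rw [getLast?_eq_getElem?, getElem?_eq_some_iff] at h
      exact Or.inr (hL.nodup.getElem_inj_iff.mp h.2).symm
    · exact absurd (show L.Rise L[e x] L[p.2] by rwa [he]) (hsrc (e x))
  case uniquePath =>
    obtain _ | ⟨c, t⟩ := l
    · rfl
    have hchain : (((p.1 :: c :: (t ++ [p.2]))).map fun i : Fin L.length ↦ L[i]).IsChain (· < ·) :=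
      (isChain_map _).mpr ((show IsChain _ (p.1 :: _) from hl).imp fun _ _ ↦ hL.lt_of_qFarr)
    have hpw := pairwise_cons.mp hchain.pairwise
    exact (hp.1.2 (hpw.1 _ (by simp)) ((pairwise_cons.mp hpw.2).1 _ (by simp))).elim
  · have hcov : ∀ a b : P, a ⋖ b → QFarr hL.quiver hL.alienArrows (e a) (e b) :=
      fun a b h ↦ hL.qFarr_of_covBy (by rwa [he, he])
    exact ReflTransGen.lift e hcov _ _ (le_iff_reflTransGen_covBy.mp hxy)
  · simpa [he] using hL.le_of_leQF h

end Realization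

section Peaks

variable {P : Type*} [PartialOrder P] {x y z z' a b c : P}

theorem rLt_iff_lt : RLt (· ≤ ·) x y ↔ x < y := lt_iff_le_not_ge.symm

theorem IsMin.incompRel (hx : IsMin x) (hy : IsMin y) (hxy : x ≠ y) : IncompRel (· ≤ ·) x y :=
  ⟨fun h ↦ hxy (le_antisymm h (hy h)), fun h ↦ hxy (le_antisymm (hx h) h)⟩

theorem IsMax.false_of_incompRel (hz : IsMax z) (hR1 : ¬ ContainsR1 (fun x y : P ↦ x ≤ y))
    (ha : a < z) (hb : b < z) (hc : c < z) (hab : IncompRel (· ≤ ·) a b)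
    (hac : IncompRel (· ≤ ·) a c) (hbc : IncompRel (· ≤ ·) b c) : False :=
  hR1 ⟨z, a, b, c, hz, hab.ne, hac.ne, hbc.ne, hab, hac, hbc, rLt_iff_lt.mpr ha,
    rLt_iff_lt.mpr hb, rLt_iff_lt.mpr hc⟩

structure PeakAdj (z z' : P) : Prop where
  isMax_left : IsMax z
  isMax_right : IsMax z'
  ne : z ≠ z'
  exists_le : ∃ x, x ≤ z ∧ x ≤ z'

theorem PeakAdj.symm (h : PeakAdj z z') : PeakAdj z' z :=
  ⟨h.isMax_right, h.isMax_left, h.ne.symm, h.exists_le.imp fun _ hx ↦ hx.symm⟩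

theorem PeakAdj.not_isMax (h : PeakAdj z z') (hx : x ≤ z) (hx' : x ≤ z') : ¬ IsMax x :=
  fun hmax ↦ h.ne ((le_antisymm hx (hmax hx)).symm.trans (le_antisymm hx' (hmax hx')))

theorem PeakAdj.lt_left (h : PeakAdj z z') (hx : x ≤ z) (hx' : x ≤ z') : x < z :=
  hx.lt_of_ne fun e ↦ h.not_isMax hx hx' (e ▸ h.isMax_left)

theorem PeakAdj.lt_right (h : PeakAdj z z') (hx : x ≤ z) (hx' : x ≤ z') : x < z' :=
  h.symm.lt_left hx' hx

theorem PeakAdj.isMin (hR2 : ¬ ContainsR2 (fun x y : P ↦ x ≤ y)) (h : PeakAdj z z')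
    (hx : x ≤ z) (hx' : x ≤ z') : IsMin x := by
  intro y hyx
  by_contra hxy
  exact hR2 ⟨z, z', y, x, h.isMax_left, h.isMax_right, h.ne, ⟨hyx, hxy⟩,
    rLt_iff_lt.mpr (h.lt_left hx hx'), rLt_iff_lt.mpr (h.lt_right hx hx')⟩

theorem PeakAdj.eq_of_le_of_le (hR2 : ¬ ContainsR2 (fun x y : P ↦ x ≤ y))
    (hcrown : ¬ ContainsCrown (fun x y : P ↦ x ≤ y) 0) (h : PeakAdj z z')
    (hx : x ≤ z) (hx' : x ≤ z') (hy : y ≤ z) (hy' : y ≤ z') : x = y := by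
  by_contra hxy
  have hinc := (h.isMin hR2 hx hx').incompRel (h.isMin hR2 hy hy') hxy
  have hlt : x < z ∧ x < z' ∧ y < z ∧ y < z' :=
    ⟨h.lt_left hx hx', h.lt_right hx hx', h.lt_left hy hy', h.lt_right hy hy'⟩
  refine hcrown ⟨![z, z'], ![x, y], ?_, ?_, ?_, ?_, ?_, ?_⟩
  · intro i j; fin_cases i <;> fin_cases j <;> simp [h.ne, h.ne.symm]
  · intro i j; fin_cases i <;> fin_cases j <;> simp [hxy, Ne.symm hxy]
  · intro j; fin_cases j; exacts [h.isMax_left, h.isMax_right]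
  · intro i j
    fin_cases i <;> fin_cases j <;> simp [hlt.1.ne, hlt.2.1.ne, hlt.2.2.1.ne, hlt.2.2.2.ne]
  · intro i j hij; fin_cases i <;> fin_cases j <;> simp_all [RIncomp, IncompRel]
  · intro i j
    refine iff_of_true (rLt_iff_lt.mpr ?_) (by fin_cases i <;> fin_cases j <;> decide)
    fin_cases i <;> fin_cases j <;> simp [hlt]

theorem PeakAdj.eq_or_eq (hR3 : ¬ ContainsR3 (fun x y : P ↦ x ≤ y)) (h : PeakAdj z z')
    (hc : IsMax c) (hx : x ≤ z) (hx' : x ≤ z') (hxc : x ≤ c) : c = z ∨ c = z' := by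
  by_contra! hne
  exact hR3 ⟨z, z', c, x, h.isMax_left, h.isMax_right, hc, h.ne, hne.1.symm, hne.2.symm,
    rLt_iff_lt.mpr (h.lt_left hx hx'), rLt_iff_lt.mpr (h.lt_right hx hx'),
    rLt_iff_lt.mpr (hxc.lt_of_ne fun e ↦ h.not_isMax hx hx' (e ▸ hc))⟩

theorem PeakAdj.eq_or_eq_or_eq (hR1 : ¬ ContainsR1 (fun x y : P ↦ x ≤ y))
    (hR2 : ¬ ContainsR2 (fun x y : P ↦ x ≤ y)) (hR3 : ¬ ContainsR3 (fun x y : P ↦ x ≤ y))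
    (ha : PeakAdj z a) (hb : PeakAdj z b) (hc : PeakAdj z c) : a = b ∨ a = c ∨ b = c := by
  by_contra! hne
  obtain ⟨wa, hwa, hwa'⟩ := ha.exists_le
  obtain ⟨wb, hwb, hwb'⟩ := hb.exists_le
  obtain ⟨wc, hwc, hwc'⟩ := hc.exists_le
  have hdist : ∀ {a b w w' : P}, PeakAdj z a → PeakAdj z b → a ≠ b → w ≤ z → w ≤ a → w' ≤ b →
      w ≠ w' := by
    rintro a b w _ ha hb hab hw hwa hwb rfl
    exact (ha.eq_or_eq hR3 hb.isMax_right hw hwa hwb).elim hb.ne.symm hab.symm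
  have hinc : ∀ {a b w w' : P}, PeakAdj z a → PeakAdj z b → a ≠ b → w ≤ z → w ≤ a → w' ≤ z →
      w' ≤ b → IncompRel (· ≤ ·) w w' := fun ha hb hab hw hwa hw' hwb ↦
    (ha.isMin hR2 hw hwa).incompRel (hb.isMin hR2 hw' hwb) (hdist ha hb hab hw hwa hwb)
  exact ha.isMax_left.false_of_incompRel hR1 (ha.lt_left hwa hwa') (hb.lt_left hwb hwb')
    (hc.lt_left hwc hwc') (hinc ha hb hne.1 hwa hwa' hwb hwb')
    (hinc ha hc hne.2.1 hwa hwa' hwc hwc') (hinc hb hc hne.2.2 hwb hwb' hwc hwc')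

/-- The common lower bounds of consecutive peaks of the cycle form a crown. -/
theorem false_of_peakAdj_cycle (hR2 : ¬ ContainsR2 (fun x y : P ↦ x ≤ y))
    (hR3 : ¬ ContainsR3 (fun x y : P ↦ x ≤ y))
    (hcrown : ∀ n, ¬ ContainsCrown (fun x y : P ↦ x ≤ y) n) {k : ℕ} (c : Fin (k + 3) → P)
    (hc : Function.Injective c) (hadj : ∀ i, PeakAdj (c i) (c (i + 1))) : False := by
  have hadj' : ∀ i, PeakAdj (c (i - 1)) (c i) := fun i ↦ by simpa using hadj (i - 1)
  choose x hx hx' using fun i ↦ (hadj' i).exists_le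
  have hxlt : ∀ i j, x i ≤ c j → j = i ∨ j = i - 1 := fun i j h ↦
    ((hadj' i).eq_or_eq hR3 (hadj' j).isMax_right (hx i) (hx' i) h).symm.imp (hc ·) (hc ·)
  have htwo : (1 + 1 : Fin (k + 3)) ≠ 0 := by simp [Fin.ext_iff, Fin.val_add, Nat.mod_eq_of_lt]
  have hxinj : Function.Injective x := by
    intro i j hij
    rcases hxlt i j (hij ▸ hx' j) with rfl | rfl
    · rfl
    rcases hxlt (i - 1) i (hij ▸ hx' i) with h | h
    · exact h
    · exact (htwo (sub_eq_self.mp (show i - (1 + 1) = i by rw [← sub_sub]; exact h.symm))).elim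
  have hxmin : ∀ i, IsMin (x i) := fun i ↦ (hadj' i).isMin hR2 (hx i) (hx' i)
  refine hcrown (k + 1) ⟨c, x, hc, hxinj, fun j ↦ (hadj j).isMax_left, fun i j h ↦ ?_,
    fun i j hij ↦ (hxmin i).incompRel (hxmin j) (hxinj.ne hij), fun i j ↦ ?_⟩
  · exact (hadj' i).not_isMax (hx i) (hx' i) (h ▸ (hadj j).isMax_left)
  · refine ⟨fun h ↦ hxlt i j (rLt_iff_lt.mp h).le, ?_⟩
    rintro (rfl | rfl)
    · exact rLt_iff_lt.mpr ((hadj' j).lt_right (hx j) (hx' j))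
    · exact rLt_iff_lt.mpr ((hadj' i).lt_left (hx i) (hx' i))

end Peaks

section PeakPath

open List

variable {P : Type*} [PartialOrder P] {x z z' : P}

structure IsPeakPath (M : List P) : Prop where
  nodup : M.Nodup
  isMax : ∀ z ∈ M, IsMax z
  isChain : M.IsChain PeakAdj

theorem IsPeakPath.infix {M M' : List P} (hM : IsPeakPath M) (h : M' <:+: M) : IsPeakPath M' :=
  ⟨hM.nodup.sublist h.sublist, fun z hz ↦ hM.isMax z (h.subset hz), hM.isChain.infix h⟩

theorem IsPeakPath.not_peakAdj (hR2 : ¬ ContainsR2 (fun x y : P ↦ x ≤ y))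
    (hR3 : ¬ ContainsR3 (fun x y : P ↦ x ≤ y))
    (hcrown : ∀ n, ¬ ContainsCrown (fun x y : P ↦ x ≤ y) n) {a b : P} {m : List P}
    (hM : IsPeakPath (a :: m ++ [b])) (hm : m ≠ []) : ¬ PeakAdj b a := by
  intro hba
  set l := a :: m ++ [b]
  obtain ⟨k, hk⟩ : ∃ k, l.length = k + 3 := ⟨m.length - 1, by
    have := length_pos_iff.mpr hm
    simp only [l, length_cons, length_append, length_nil]; omega⟩
  refine false_of_peakAdj_cycle hR2 hR3 hcrown (k := k) (fun i ↦ l[i.val]'(by omega))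
    (fun i j h ↦ Fin.ext (hM.nodup.getElem_inj_iff.mp h)) fun i ↦ ?_
  rcases Fin.eq_castSucc_or_eq_last i with ⟨i, rfl⟩ | rfl
  · simpa [Fin.coeSucc_eq_succ] using isChain_iff_getElem.mp hM.isChain i (by omega)
  · have hmlen : m.length = k + 1 := by
      simp only [l, length_cons, length_append, length_nil] at hk; omega
    simpa [Fin.last_add_one, l, getElem_append_right, hmlen] using hba

theorem IsPeakPath.not_le_of_le (hR2 : ¬ ContainsR2 (fun x y : P ↦ x ≤ y))
    (hR3 : ¬ ContainsR3 (fun x y : P ↦ x ≤ y))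
    (hcrown : ∀ n, ¬ ContainsCrown (fun x y : P ↦ x ≤ y) n) {M : List P} {z'' : P}
    (hM : IsPeakPath (z :: z' :: M)) (hz'' : z'' ∈ M) (hx : x ≤ z) : ¬ x ≤ z'' := by
  intro hx''
  obtain ⟨s, t, rfl⟩ := append_of_mem hz''
  have hsub : IsPeakPath (z :: (z' :: s) ++ [z'']) := hM.infix ⟨[], t, by simp⟩
  have hne : z'' ≠ z := fun h ↦ (nodup_cons.mp hM.nodup).1 (by simp [← h])
  exact hsub.not_peakAdj hR2 hR3 hcrown (cons_ne_nil _ _)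
    ⟨hM.isMax z'' (by simp), hM.isMax z (by simp), hne, x, hx'', hx⟩

theorem IsPeakPath.reverse {M : List P} (hM : IsPeakPath M) : IsPeakPath M.reverse :=
  ⟨nodup_reverse.mpr hM.nodup, fun z hz ↦ hM.isMax z (mem_reverse.mp hz),
    isChain_reverse.mpr (hM.isChain.imp fun _ _ h ↦ h.symm)⟩

theorem IsPeakPath.append_singleton {s : List P} (hM : IsPeakPath (s ++ [z]))
    (hz' : z' ∉ s ++ [z]) (h : PeakAdj z z') : IsPeakPath (s ++ [z] ++ [z']) := by
  refine ⟨nodup_append.mpr ⟨hM.nodup, nodup_singleton _, ?_⟩, ?_, ?_⟩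
  · rintro a ha b hb rfl; exact hz' (mem_singleton.mp hb ▸ ha)
  · intro a ha
    rcases mem_append.mp ha with ha | ha
    · exact hM.isMax a ha
    · exact (mem_singleton.mp ha) ▸ h.isMax_right
  · rw [isChain_append]
    exact ⟨hM.isChain, isChain_singleton _, by simpa using h⟩

theorem Finite.exists_le_isMax [Finite P] (x : P) : ∃ z, x ≤ z ∧ IsMax z := by
  obtain ⟨z, hxz, hz⟩ := Finite.exists_le_maximal (p := fun _ : P ↦ True) (a := x) trivial
  exact ⟨z, hxz, fun _ h ↦ hz.2 trivial h⟩

theorem reflTransGen_peakAdj_of_le (hz : IsMax z) (hz' : IsMax z') (hx : x ≤ z) (hx' : x ≤ z') :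
    ReflTransGen PeakAdj z z' := by
  rcases eq_or_ne z z' with rfl | hne
  · rfl
  · exact .single ⟨hz, hz', hne, x, hx, hx'⟩

theorem reflTransGen_peakAdj [Finite P] (hconn : RConnected (fun x y : P ↦ x ≤ y))
    (hz : IsMax z) (hz' : IsMax z') : ReflTransGen PeakAdj z z' := by
  suffices ∀ a b, (RCompGraph (fun x y : P ↦ x ≤ y)).Walk a b → ∀ z z', IsMax z → IsMax z' →
      a ≤ z → b ≤ z' → ReflTransGen PeakAdj z z' from
    this z z' (hconn.preconnected z z').some z z' hz hz' le_rfl le_rfl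
  intro a b w
  induction w with
  | nil => exact fun z z' hz hz' ha ha' ↦ reflTransGen_peakAdj_of_le hz hz' ha ha'
  | @cons a c b hac _ ih =>
    intro z z' hz hz' ha hb
    obtain ⟨y, hcy, hy⟩ := Finite.exists_le_isMax c
    refine .trans ?_ (ih y z' hy hz' hcy hb)
    rcases hac.2 with h | h
    · exact reflTransGen_peakAdj_of_le hz hy ha (h.trans hcy)
    · exact reflTransGen_peakAdj_of_le hz hy (h.trans ha) hcy

/-- An interior vertex of a longest peak path already has two neighbours on it, and a new
neighbour of an end vertex would extend the path. -/
theorem IsPeakPath.mem_of_peakAdj (hR1 : ¬ ContainsR1 (fun x y : P ↦ x ≤ y))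
    (hR2 : ¬ ContainsR2 (fun x y : P ↦ x ≤ y)) (hR3 : ¬ ContainsR3 (fun x y : P ↦ x ≤ y))
    {M : List P} (hM : IsPeakPath M) (hlong : ∀ M' : List P, IsPeakPath M' → M'.length ≤ M.length)
    (hz : z ∈ M) (h : PeakAdj z z') : z' ∈ M := by
  have hend : ∀ s y, IsPeakPath (s ++ [y]) → (s ++ [y]).length = M.length → PeakAdj y z' →
      z' ∈ s ++ [y] := fun s y hs hlen hy ↦ by_contra fun hz' ↦ by
    have := hlong _ (hs.append_singleton hz' hy)
    simp only [length_append, length_singleton] at this hlen; omega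
  obtain ⟨s, t, rfl⟩ := append_of_mem hz
  obtain _ | ⟨q, t⟩ := t
  · exact hend s z hM rfl h
  obtain rfl | ⟨s, p, rfl⟩ := eq_nil_or_concat s
  · have := hend (q :: t).reverse z (by simpa using hM.reverse) (by simp) h
    simp only [reverse_cons, append_assoc, mem_append, mem_reverse, singleton_append, mem_cons,
      nil_append] at this ⊢
    tauto
  have hpz : PeakAdj p z := by
    simpa using hM.isChain.infix (show [p, z] <:+: _ from ⟨s, q :: t, by simp⟩)
  have hzq : PeakAdj z q := by
    simpa using hM.isChain.infix (show [z, q] <:+: _ from ⟨s ++ [p], t, by simp⟩)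
  have hpq : p ≠ q := by simpa using hM.nodup.sublist (show [p, q] <+ _ by simp)
  rcases hpz.symm.eq_or_eq_or_eq hR1 hR2 hR3 hzq h with h | rfl | rfl
  · exact absurd h hpq
  · simp
  · simp

theorem exists_isPeakPath_forall_mem [Finite P] (hconn : RConnected (fun x y : P ↦ x ≤ y))
    (hR1 : ¬ ContainsR1 (fun x y : P ↦ x ≤ y)) (hR2 : ¬ ContainsR2 (fun x y : P ↦ x ≤ y))
    (hR3 : ¬ ContainsR3 (fun x y : P ↦ x ≤ y)) :
    ∃ M, IsPeakPath M ∧ ∀ z : P, IsMax z → z ∈ M := by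
  classical
  have := Fintype.ofFinite P
  have := hconn.nonempty
  obtain ⟨z₀, -, hz₀⟩ := Finite.exists_le_isMax (Classical.arbitrary P)
  have hz₀path : IsPeakPath [z₀] := ⟨nodup_singleton _, by simpa using hz₀, isChain_singleton _⟩
  let IsPathOfLength (k : ℕ) : Prop := ∃ M : List P, IsPeakPath M ∧ M.length = k
  obtain ⟨M, hM, hMN⟩ := Nat.findGreatest_spec (P := IsPathOfLength)
    hz₀path.nodup.length_le_card ⟨[z₀], hz₀path, rfl⟩
  have hlong : ∀ M' : List P, IsPeakPath M' → M'.length ≤ M.length := fun M' hM' ↦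
    hMN ▸ Nat.le_findGreatest hM'.nodup.length_le_card ⟨M', hM', rfl⟩
  obtain ⟨z₁, hz₁⟩ := exists_mem_of_ne_nil M (ne_nil_of_length_pos (hlong _ hz₀path))
  refine ⟨M, hM, fun z hz ↦ ?_⟩
  have hreach := reflTransGen_peakAdj hconn (hM.isMax z₁ hz₁) hz
  clear hz
  induction hreach with
  | refl => exact hz₁
  | tail _ h ih => exact hM.mem_of_peakAdj hR1 hR2 hR3 hlong ih h

end PeakPath

section Construction

open List

variable {P : Type*} [PartialOrder P]

theorem exists_isLayout_cone [Finite P] (hR1 : ¬ ContainsR1 (fun x y : P ↦ x ≤ y)) {z : P}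
    (hz : IsMax z) (a b : Option P) (ha : ∀ w ∈ a, IsMin w ∧ w < z)
    (hb : ∀ w ∈ b, IsMin w ∧ w < z) (hab : ∀ w ∈ a, ∀ w' ∈ b, w ≠ w') :
    ∃ u d : List P, IsLayout (u ++ z :: d.reverse) ∧ (∀ x, x ∈ u ++ z :: d.reverse ↔ x ≤ z) ∧
      (∀ w ∈ a, u.head? = some w) ∧ ∀ w ∈ b, d.head? = some w := by
  classical
  have := Fintype.ofFinite P
  set S := Finset.univ.filter (· < z)
  have hS : ∀ x, x ∈ S ↔ x < z := by simp [S]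
  obtain ⟨C, hCS, hC, hD, haC, hbC⟩ := S.exists_isChain_isChain_sdiff_mem
    (fun x hx y hy w hw ↦ hz.false_of_incompRel hR1 ((hS x).mp hx) ((hS y).mp hy) ((hS w).mp hw))
    a b (fun w hw ↦ (hS w).mpr (ha w hw).2)
    fun w hw w' hw' ↦ (ha w hw).1.incompRel (hb w' hw').1 (hab w hw w' hw')
  obtain ⟨u, hu, hum⟩ := C.exists_pairwise_lt_of_isChain hC
  obtain ⟨d, hd, hdm⟩ := (S \ C).exists_pairwise_lt_of_isChain hD
  have hult : ∀ x ∈ u, x < z := fun x hx ↦ (hS x).mp (hCS ((hum x).mp hx))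
  have hdlt : ∀ x ∈ d, x < z := fun x hx ↦ (hS x).mp (Finset.sdiff_subset ((hdm x).mp hx))
  have hchain : ∀ l : List P, l.Pairwise (· < ·) → (∀ x ∈ l, x < z) → (l ++ [z]).IsChain (· < ·) :=
    fun l hl hlt ↦ (pairwise_append.mpr ⟨hl, pairwise_singleton _ _, by simpa using hlt⟩).isChain
  refine ⟨u, d, isLayout_mountain (hchain u hu hult) (hchain d hd hdlt) ?_, fun x ↦ ?_,
    fun w hw ↦ hu.head?_eq_of_isMin ((hum w).mpr (haC w hw)) (ha w hw).1,
    fun w hw ↦ hd.head?_eq_of_isMin ((hdm w).mpr ?_) (hb w hw).1⟩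
  · have hnd : ∀ l : List P, l.Pairwise (· < ·) → l.Nodup := fun l hl ↦ hl.imp ne_of_lt
    refine nodup_append.mpr ⟨hnd u hu, nodup_cons.mpr ⟨fun h ↦ (hdlt z (mem_reverse.mp h)).false,
      nodup_reverse.mpr (hnd d hd)⟩, ?_⟩
    rintro x hx y hy rfl
    rcases mem_cons.mp hy with rfl | hy
    · exact (hult x hx).false
    · exact (Finset.mem_sdiff.mp ((hdm x).mp (mem_reverse.mp hy))).2 ((hum x).mp hx)
  · have hxC : x ∈ C → x ∈ S := (hCS ·)
    simp only [mem_append, mem_cons, mem_reverse, hum, hdm, Finset.mem_sdiff, le_iff_lt_or_eq,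
      ← hS]
    tauto
  · exact Finset.mem_sdiff.mpr ⟨(hS w).mpr (hb w hw).2, hbC w hw⟩

theorem IsPeakPath.incompRel (hR2 : ¬ ContainsR2 (fun x y : P ↦ x ≤ y))
    (hR3 : ¬ ContainsR3 (fun x y : P ↦ x ≤ y))
    (hcrown : ∀ n, ¬ ContainsCrown (fun x y : P ↦ x ≤ y) n) {M : List P} {z z' z'' w x y : P}
    (hM : IsPeakPath (z :: z' :: M)) (hw : w ≤ z) (hw' : w ≤ z') (hz'' : z'' ∈ z' :: M)
    (hx : x ≤ z) (hy : y ≤ z'') (hxw : x ≠ w) (hyw : y ≠ w) : IncompRel (· ≤ ·) x y := by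
  have hlower : ∀ v, v ≤ z → v ≤ z'' → v = w := fun v hv hv'' ↦ by
    rcases mem_cons.mp hz'' with rfl | hz''
    · exact (isChain_cons_cons.mp hM.isChain).1.eq_of_le_of_le hR2 (hcrown 0) hv hv'' hw hw'
    · exact absurd hv'' (hM.not_le_of_le hR2 hR3 hcrown hz'' hv)
  exact ⟨fun h ↦ hxw (hlower x hx (h.trans hy)), fun h ↦ hyw (hlower y (h.trans hx) hy)⟩

theorem IsPeakPath.exists_isLayout [Finite P] (hR1 : ¬ ContainsR1 (fun x y : P ↦ x ≤ y))
    (hR2 : ¬ ContainsR2 (fun x y : P ↦ x ≤ y)) (hR3 : ¬ ContainsR3 (fun x y : P ↦ x ≤ y))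
    (hcrown : ∀ n, ¬ ContainsCrown (fun x y : P ↦ x ≤ y) n) {z : P} {M : List P}
    (hM : IsPeakPath (z :: M)) (w₀ : Option P)
    (hw₀ : ∀ w ∈ w₀, IsMin w ∧ w < z ∧ ∀ z' ∈ M, ¬ w ≤ z') :
    ∃ L, IsLayout L ∧ (∀ x, x ∈ L ↔ ∃ z' ∈ z :: M, x ≤ z') ∧ ∀ w ∈ w₀, L.head? = some w := by
  induction M generalizing z w₀ with
  | nil =>
    obtain ⟨u, d, hL, hmem, hu, -⟩ := exists_isLayout_cone hR1 (hM.isMax z (by simp)) w₀ none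
      (fun w hw ↦ ⟨(hw₀ w hw).1, (hw₀ w hw).2.1⟩) (by simp) (by simp)
    exact ⟨_, hL, by simpa using hmem, fun w hw ↦ by simp [head?_append, hu w hw]⟩
  | cons z' M ih =>
    -- the cone of `z` ends at the lower bound `w` of `z` and `z'`, where the rest of the layout
    -- starts
    have hadj : PeakAdj z z' := (isChain_cons_cons.mp hM.isChain).1
    obtain ⟨w, hwz, hwz'⟩ := hadj.exists_le
    have hwmin : IsMin w := hadj.isMin hR2 hwz hwz'
    obtain ⟨u, d, hL₁, hmem₁, hu, hd⟩ := exists_isLayout_cone hR1 hadj.isMax_left w₀ (some w)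
      (fun v hv ↦ ⟨(hw₀ v hv).1, (hw₀ v hv).2.1⟩) (by simpa using ⟨hwmin, hadj.lt_left hwz hwz'⟩)
      fun v hv _ hw e ↦ (hw₀ v hv).2.2 z' (by simp) (e ▸ Option.mem_some_iff.mp hw ▸ hwz')
    obtain ⟨d, rfl⟩ := head?_eq_some_iff.mp (hd w rfl)
    obtain ⟨R, hR, hRmem, hRhead⟩ := ih (hM.infix (suffix_cons _ _).isInfix) (some w)
      (by simpa using ⟨hwmin, hadj.lt_right hwz hwz', fun z'' hz'' ↦
        hM.not_le_of_le hR2 hR3 hcrown hz'' hwz⟩)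
    obtain ⟨R, rfl⟩ := head?_eq_some_iff.mp (hRhead w rfl)
    have hU : IsLayout (u ++ z :: d.reverse ++ [w]) := by simpa using hL₁
    have hcross : ∀ x ∈ u ++ z :: d.reverse, ∀ y ∈ R, IncompRel (· ≤ ·) x y := by
      intro x hx y hy
      have hxz : x ≤ z := (hmem₁ x).mp (by
        simp only [mem_append, mem_cons, reverse_cons, mem_reverse, not_mem_nil] at hx ⊢; tauto)
      have hxw : x ≠ w := fun e ↦ (nodup_append.mp hU.nodup).2.2 x hx w (by simp) e
      obtain ⟨z'', hz'', hyz''⟩ := (hRmem y).mp (mem_cons_of_mem _ hy)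
      exact hM.incompRel hR2 hR3 hcrown hwz hwz' hz'' hxz hyz'' hxw
        fun e ↦ (nodup_cons.mp hR.nodup).1 (e ▸ hy)
    refine ⟨_, hU.append hR hwmin hcross, fun x ↦ ?_, fun v hv ↦ by simp [head?_append, hu v hv]⟩
    have hsplit : x ∈ u ++ z :: d.reverse ++ w :: R ↔
        x ∈ u ++ z :: (w :: d).reverse ∨ x ∈ w :: R := by
      simp only [mem_append, mem_cons, reverse_cons, mem_reverse, not_mem_nil]; tauto
    rw [hsplit, hmem₁, hRmem]
    simp

end Construction

theorem exists_isLayout_of_isTypeA {P : Type*} [PartialOrder P] [Finite P]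
    (hA : IsTypeA (fun x y : P ↦ x ≤ y)) : ∃ L : List P, IsLayout L ∧ ∀ x, x ∈ L := by
  obtain ⟨hconn, hR1, hR2, hR3, hcrown⟩ := hA
  have : Nonempty P := hconn.nonempty
  obtain ⟨M, hM, hall⟩ := exists_isPeakPath_forall_mem hconn hR1 hR2 hR3
  obtain ⟨z, -, hz⟩ := Finite.exists_le_isMax (Classical.arbitrary P)
  obtain ⟨z₁, M, rfl⟩ := List.exists_cons_of_ne_nil (List.ne_nil_of_mem (hall z hz))
  obtain ⟨L, hL, hmem, -⟩ := hM.exists_isLayout hR1 hR2 hR3 hcrown none (by simp)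
  refine ⟨L, hL, fun x ↦ (hmem x).mpr ?_⟩
  obtain ⟨z, hxz, hz⟩ := Finite.exists_le_isMax x
  exact ⟨z, hall z hz, hxz⟩

theorem typeA_poset_is_realized_by_typeA_quiver_general {P : Type*} [Fintype P] [PartialOrder P]
    {n : ℕ} (hcard : Fintype.card P = n)
    (hA : IsTypeA (fun x y : P => x ≤ y)) :
    ∃ (Q : TypeAQuiver n) (F : Set (Fin n × Fin n)), IsAlienSet Q F ∧
      ∃ e : P ≃ Fin n, ∀ x y : P, x ≤ y ↔ leQF Q F (e x) (e y) := by
  classical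
  obtain ⟨L, hL, hmem⟩ := exists_isLayout_of_isTypeA hA
  obtain rfl : L.length = n := by
    rw [← hcard, ← Fintype.card_fin L.length]
    exact Fintype.card_congr (hL.nodup.getEquivOfForallMemList L hmem)
  exact hL.exists_alienSet hmem

/-- Every poset of type `A` with `n` elements is order-isomorphic
to the poset `P_{Q^F}` for some quiver `Q` of type `A_n` and alien set `F` for `Q`. -/
theorem typeA_poset_is_realized_by_typeA_quiver {P : Type*} [Fintype P] [PartialOrder P]
    {n : ℕ} (hn : 1 ≤ n) (hcard : Fintype.card P = n)
    (hA : IsTypeA (fun x y : P => x ≤ y)) :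
    ∃ (Q : TypeAQuiver n) (F : Set (Fin n × Fin n)), IsAlienSet Q F ∧
      ∃ e : P ≃ Fin n, ∀ x y : P, x ≤ y ↔ leQF Q F (e x) (e y) :=
  typeA_poset_is_realized_by_typeA_quiver_general hcard hA
end

section
/- Let P be a finite poset that contains neither R2 nor the crown R_{4,0} as a peak-subposet, and let z and z' be distinct maximal elements of P. Then D(z) ∩ D(z') contains at most one element. -/
/-! Two distinct common lower bounds `a ≠ b` of the distinct maximal elements `z, z'` lie
strictly below both. If `a` and `b` are comparable, the smaller one, the larger one and
`z, z'` form an `R2`; otherwise `a, b` and `z, z'` form the crown `R_{4,0}`. -/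

section PartialOrder

variable {P : Type*} [PartialOrder P]

theorem RIsMax.not_le_of_ne {z w : P} (hz : RIsMax (fun x y : P => x ≤ y) z) (hne : z ≠ w) :
    ¬ z ≤ w :=
  fun h => hne (le_antisymm h (hz w h))

theorem rlt_iff_lt {x y : P} : RLt (fun x y : P => x ≤ y) x y ↔ x < y :=
  lt_iff_le_not_ge.symm

theorem lt_of_le_of_le_of_not_le {c z w : P} (hcz : c ≤ z) (hcw : c ≤ w) (hzw : ¬ z ≤ w) :
    c < z :=
  lt_of_le_not_ge hcz fun hzc => hzw (hzc.trans hcw)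

theorem rincomp_of_not_containsR2 (hR2 : ¬ ContainsR2 (fun x y : P => x ≤ y)) {z z' a b : P}
    (hz : RIsMax (fun x y : P => x ≤ y) z) (hz' : RIsMax (fun x y : P => x ≤ y) z')
    (hne : z ≠ z') (hab : a ≠ b) (haz : a < z) (haz' : a < z') (hbz : b < z) (hbz' : b < z') :
    RIncomp (fun x y : P => x ≤ y) a b := by
  simp only [ContainsR2, rlt_iff_lt, not_exists, not_and] at hR2
  exact ⟨fun h => hR2 z z' a b hz hz' hne (h.lt_of_ne hab) hbz hbz',
    fun h => hR2 z z' b a hz hz' hne (h.lt_of_ne hab.symm) haz haz'⟩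

end PartialOrder

/-- In the crown `R_{4,0}` every `x i` lies below every `z j`, since on `Fin 2` the two
indices `i` and `i - 1` exhaust all of them. -/
theorem containsCrown_zero_of {α : Type*} {le : α → α → Prop} {z z' a b : α}
    (hz : RIsMax le z) (hz' : RIsMax le z') (hne : z ≠ z') (hab : a ≠ b)
    (hinc : RIncomp le a b) (haz : RLt le a z) (haz' : RLt le a z')
    (hbz : RLt le b z) (hbz' : RLt le b z') :
    ContainsCrown le 0 := by
  have ne_of_rlt : ∀ {x y : α}, RLt le x y → x ≠ y := fun h hxy => h.2 (hxy ▸ h.1)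
  have pair_injective : ∀ {u v : α}, u ≠ v → Function.Injective ![u, v] := by
    intro u v huv i j
    fin_cases i <;> fin_cases j <;> simp [huv, huv.symm]
  have all_adjacent : ∀ i j : Fin 2, j = i ∨ j = i - 1 := by decide
  refine ⟨![z, z'], ![a, b], pair_injective hne, pair_injective hab, ?_, ?_, ?_, ?_⟩
  · intro j
    fin_cases j <;> assumption
  · intro i j
    fin_cases i <;> fin_cases j
    exacts [ne_of_rlt haz, ne_of_rlt haz', ne_of_rlt hbz, ne_of_rlt hbz']
  · intro i j hij
    fin_cases i <;> fin_cases j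
    exacts [absurd rfl hij, hinc, ⟨hinc.2, hinc.1⟩, absurd rfl hij]
  · intro i j
    simp only [all_adjacent i j, iff_true]
    fin_cases i <;> fin_cases j <;> assumption

theorem inter_downcones_subsingleton_general {P : Type*} [PartialOrder P]
    (hR2 : ¬ ContainsR2 (fun x y : P => x ≤ y))
    (hR40 : ¬ ContainsCrown (fun x y : P => x ≤ y) 0)
    (z z' : P) (hz : RIsMax (fun x y : P => x ≤ y) z)
    (hz' : RIsMax (fun x y : P => x ≤ y) z') (hne : z ≠ z') :
    (RDown (fun x y : P => x ≤ y) z ∩ RDown (fun x y : P => x ≤ y) z').Subsingleton := by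
  rintro a ⟨haz, haz'⟩ b ⟨hbz, hbz'⟩
  by_contra hab
  have hzz' := hz.not_le_of_ne hne
  have hz'z := hz'.not_le_of_ne hne.symm
  have ha : a < z ∧ a < z' :=
    ⟨lt_of_le_of_le_of_not_le haz haz' hzz', lt_of_le_of_le_of_not_le haz' haz hz'z⟩
  have hb : b < z ∧ b < z' :=
    ⟨lt_of_le_of_le_of_not_le hbz hbz' hzz', lt_of_le_of_le_of_not_le hbz' hbz hz'z⟩
  have hinc := rincomp_of_not_containsR2 hR2 hz hz' hne hab ha.1 ha.2 hb.1 hb.2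
  simp only [← rlt_iff_lt] at ha hb
  exact hR40 (containsCrown_zero_of hz hz' hne hab hinc ha.1 ha.2 hb.1 hb.2)

/-- In a finite poset containing neither `R2` nor the crown
`R_{4,0}` as a peak-subposet, the intersection of the down-cones of two distinct
maximal elements has at most one element. -/
theorem inter_downcones_subsingleton {P : Type*} [Fintype P] [PartialOrder P]
    (hR2 : ¬ ContainsR2 (fun x y : P => x ≤ y))
    (hR40 : ¬ ContainsCrown (fun x y : P => x ≤ y) 0)
    (z z' : P) (hz : RIsMax (fun x y : P => x ≤ y) z)
    (hz' : RIsMax (fun x y : P => x ≤ y) z') (hne : z ≠ z') :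
    (RDown (fun x y : P => x ≤ y) z ∩ RDown (fun x y : P => x ≤ y) z').Subsingleton :=
  inter_downcones_subsingleton_general hR2 hR40 z z' hz hz' hne
end

section
/- Let P be a finite poset with at least two maximal elements that contains none of R1, R2, and R3 as a peak-subposet. Then every maximal element z of P has at most two neighbors; that is, there are at most two maximal elements z' ≠ z with D(z) ∩ D(z') ≠ ∅. -/
/- The down-cones of three distinct neighbors z₁, z₂, z₃ of z meet D(z) in elements
x₁, x₂, x₃, each strictly below z and its zᵢ. Absence of R2 makes every xᵢ minimal, so two
comparable xᵢ coincide and that element lies below three maximal elements, which R3 forbids.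
Hence the xᵢ are pairwise incomparable and strictly below z, which is R1. -/

theorem Set.ncard_le_two_of_not_exists {α : Type*} {s : Set α}
    (h : ¬ ∃ a ∈ s, ∃ b ∈ s, ∃ c ∈ s, a ≠ b ∧ a ≠ c ∧ b ≠ c) : s.ncard ≤ 2 := by
  rcases s.finite_or_infinite with hs | hs
  · exact not_lt.mp fun h' => h ((Set.two_lt_ncard hs).mp h')
  · simp only [hs.ncard, zero_le]

section PeakSubposets

variable {P : Type*} [PartialOrder P]

theorem IsMax.lt_of_le_of_le_of_ne {x z z' : P} (hz : IsMax z) (hxz : x ≤ z) (hxz' : x ≤ z')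
    (hne : z ≠ z') : x < z :=
  hxz.lt_of_ne <| by rintro rfl; exact hne (hz.eq_of_le hxz')

theorem exists_lt_lt_of_mem_neighborSet {z z' : P} (hz : IsMax z)
    (h : z' ∈ NeighborSet (· ≤ ·) z) : ∃ x, x < z ∧ x < z' := by
  obtain ⟨hz', hne, x, hxz, hxz'⟩ := h
  exact ⟨x, hz.lt_of_le_of_le_of_ne hxz hxz' hne.symm, IsMax.lt_of_le_of_le_of_ne hz' hxz' hxz hne⟩

theorem isMin_of_not_containsR2 (hR2 : ¬ ContainsR2 (· ≤ · : P → P → Prop)) {x z z' : P}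
    (hz : IsMax z) (hz' : IsMax z') (hne : z ≠ z') (hxz : x < z) (hxz' : x < z') : IsMin x :=
  isMin_iff_forall_not_lt.mpr fun y hyx =>
    hR2 ⟨z, z', y, x, hz, hz', hne, lt_iff_le_not_ge.mp hyx, lt_iff_le_not_ge.mp hxz,
      lt_iff_le_not_ge.mp hxz'⟩

theorem not_le_of_mem_neighborSet (hR2 : ¬ ContainsR2 (· ≤ · : P → P → Prop))
    (hR3 : ¬ ContainsR3 (· ≤ · : P → P → Prop)) {z z₁ z₂ x₁ x₂ : P} (hz : IsMax z)
    (h₁ : z₁ ∈ NeighborSet (· ≤ ·) z) (h₂ : z₂ ∈ NeighborSet (· ≤ ·) z) (hne : z₁ ≠ z₂)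
    (hx₁z : x₁ < z) (hx₁ : x₁ < z₁) (hx₂z : x₂ < z) (hx₂ : x₂ < z₂) : ¬ x₁ ≤ x₂ := by
  intro hle
  have hmin : IsMin x₂ := isMin_of_not_containsR2 hR2 hz h₂.1 h₂.2.1.symm hx₂z hx₂
  obtain rfl := hmin.eq_of_le hle
  exact hR3 ⟨z, z₁, z₂, x₁, hz, h₁.1, h₂.1, h₁.2.1.symm, h₂.2.1.symm, hne,
    lt_iff_le_not_ge.mp hx₁z, lt_iff_le_not_ge.mp hx₁, lt_iff_le_not_ge.mp hx₂⟩

theorem rIncomp_of_mem_neighborSet (hR2 : ¬ ContainsR2 (· ≤ · : P → P → Prop))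
    (hR3 : ¬ ContainsR3 (· ≤ · : P → P → Prop)) {z z₁ z₂ x₁ x₂ : P} (hz : IsMax z)
    (h₁ : z₁ ∈ NeighborSet (· ≤ ·) z) (h₂ : z₂ ∈ NeighborSet (· ≤ ·) z) (hne : z₁ ≠ z₂)
    (hx₁z : x₁ < z) (hx₁ : x₁ < z₁) (hx₂z : x₂ < z) (hx₂ : x₂ < z₂) :
    RIncomp (· ≤ ·) x₁ x₂ :=
  ⟨not_le_of_mem_neighborSet hR2 hR3 hz h₁ h₂ hne hx₁z hx₁ hx₂z hx₂,
    not_le_of_mem_neighborSet hR2 hR3 hz h₂ h₁ hne.symm hx₂z hx₂ hx₁z hx₁⟩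

end PeakSubposets

theorem at_most_two_neighbors_general {P : Type*} [PartialOrder P]
    (hR1 : ¬ ContainsR1 (fun x y : P => x ≤ y))
    (hR2 : ¬ ContainsR2 (fun x y : P => x ≤ y))
    (hR3 : ¬ ContainsR3 (fun x y : P => x ≤ y)) :
    ∀ z : P, RIsMax (fun x y : P => x ≤ y) z →
      (NeighborSet (fun x y : P => x ≤ y) z).ncard ≤ 2 := by
  intro z hz
  refine Set.ncard_le_two_of_not_exists ?_
  rintro ⟨z₁, h₁, z₂, h₂, z₃, h₃, h₁₂, h₁₃, h₂₃⟩
  obtain ⟨x₁, hx₁z, hx₁⟩ := exists_lt_lt_of_mem_neighborSet hz h₁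
  obtain ⟨x₂, hx₂z, hx₂⟩ := exists_lt_lt_of_mem_neighborSet hz h₂
  obtain ⟨x₃, hx₃z, hx₃⟩ := exists_lt_lt_of_mem_neighborSet hz h₃
  have i₁₂ := rIncomp_of_mem_neighborSet hR2 hR3 hz h₁ h₂ h₁₂ hx₁z hx₁ hx₂z hx₂
  have i₁₃ := rIncomp_of_mem_neighborSet hR2 hR3 hz h₁ h₃ h₁₃ hx₁z hx₁ hx₃z hx₃
  have i₂₃ := rIncomp_of_mem_neighborSet hR2 hR3 hz h₂ h₃ h₂₃ hx₂z hx₂ hx₃z hx₃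
  exact hR1 ⟨z, x₁, x₂, x₃, hz, ne_of_not_le i₁₂.1, ne_of_not_le i₁₃.1, ne_of_not_le i₂₃.1,
    i₁₂, i₁₃, i₂₃, lt_iff_le_not_ge.mp hx₁z, lt_iff_le_not_ge.mp hx₂z, lt_iff_le_not_ge.mp hx₃z⟩

/-- In a finite poset with at least two maximal elements containing
none of `R1`, `R2`, `R3` as a peak-subposet, every maximal element has at most two
neighbors. -/
theorem at_most_two_neighbors {P : Type*} [Fintype P] [PartialOrder P]
    (htwo : ∃ z w : P, RIsMax (fun x y : P => x ≤ y) z ∧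
      RIsMax (fun x y : P => x ≤ y) w ∧ z ≠ w)
    (hR1 : ¬ ContainsR1 (fun x y : P => x ≤ y))
    (hR2 : ¬ ContainsR2 (fun x y : P => x ≤ y))
    (hR3 : ¬ ContainsR3 (fun x y : P => x ≤ y)) :
    ∀ z : P, RIsMax (fun x y : P => x ≤ y) z →
      (NeighborSet (fun x y : P => x ≤ y) z).ncard ≤ 2 :=
  at_most_two_neighbors_general hR1 hR2 hR3
end

section
/- Let Q be a quiver of type A_n (n ≥ 1) and let F be an alien set for Q. Then the maximal elements of the associated poset P_{Q^F} are exactly the sink vertices of Q; in particular, no arrow of F starts at a sink of Q, and the sinks of Q^F coincide with the sinks of Q. -/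
open Relation

theorem rIsMax_reflTransGen_iff {α : Type*} {r : α → α → Prop}
    (hr : ∀ x, ¬ TransGen r x x) (z : α) :
    RIsMax (ReflTransGen r) z ↔ ∀ y, ¬ r z y := by
  constructor
  · intro hmax y hzy
    exact hr z (TransGen.head' hzy (hmax y (ReflTransGen.single hzy)))
  · intro hz x hzx
    rw [reflTransGen_iff_eq hz] at hzx
    exact hzx ▸ ReflTransGen.refl

namespace IsAlienSet

variable {n : ℕ} {Q : TypeAQuiver n} {F : Set (Fin n × Fin n)}

/-- A sink lies in `Supp I(z)` only if it is `z` itself, so an extra arrow starting at a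
sink would close a cycle with the path of `Q` from its target back to that sink. -/
theorem not_isSinkQ_fst (hF : IsAlienSet Q F) {p : Fin n × Fin n} (hp : p ∈ F) :
    ¬ IsSinkQ Q p.1 := by
  intro hsink
  obtain ⟨z, -, hsrc, htgt⟩ := hF.sameSupp p hp
  obtain rfl : z = p.1 := (reflTransGen_iff_eq hsink).1 hsrc
  have hback : ReflTransGen (QFarr Q F) p.2 p.1 := ReflTransGen.mono (fun _ _ => Or.inl) _ _ htgt
  exact hF.acyclic p.1 (TransGen.head' (Or.inr hp) hback)

theorem forall_not_qFarr_iff_isSinkQ (hF : IsAlienSet Q F) (z : Fin n) :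
    (∀ y, ¬ QFarr Q F z y) ↔ IsSinkQ Q z :=
  ⟨fun h y hy => h y (Or.inl hy),
    fun hz y hzy => hzy.elim (hz y) fun hp => hF.not_isSinkQ_fst hp hz⟩

end IsAlienSet

theorem max_of_leQF_iff_sink_general {n : ℕ}
    (Q : TypeAQuiver n) (F : Set (Fin n × Fin n)) (hF : IsAlienSet Q F) :
    (∀ z : Fin n, RIsMax (leQF Q F) z ↔ IsSinkQ Q z) ∧
    (∀ p ∈ F, ¬ IsSinkQ Q p.1) ∧
    (∀ z : Fin n, (∀ y, ¬ QFarr Q F z y) ↔ IsSinkQ Q z) :=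
  ⟨fun z => (rIsMax_reflTransGen_iff hF.acyclic z).trans (hF.forall_not_qFarr_iff_isSinkQ z),
    fun _ hp => hF.not_isSinkQ_fst hp, hF.forall_not_qFarr_iff_isSinkQ⟩

/-- For a quiver `Q` of type `A_n` (`n ≥ 1`) and an alien set `F`
for `Q`: the maximal elements of the poset `P_{Q^F}` are exactly the sinks of `Q`;
no arrow of `F` starts at a sink of `Q`; and the sinks of `Q^F` coincide with the
sinks of `Q`. -/
theorem max_of_leQF_iff_sink {n : ℕ} (hn : 1 ≤ n)
    (Q : TypeAQuiver n) (F : Set (Fin n × Fin n)) (hF : IsAlienSet Q F) :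
    (∀ z : Fin n, RIsMax (leQF Q F) z ↔ IsSinkQ Q z) ∧
    (∀ p ∈ F, ¬ IsSinkQ Q p.1) ∧
    (∀ z : Fin n, (∀ y, ¬ QFarr Q F z y) ↔ IsSinkQ Q z) :=
  max_of_leQF_iff_sink_general Q F hF
end

section
/- Let P be a finite poset with n elements having exactly one maximal element and not containing R1 as a peak-subposet. Then there exist a quiver Q of type A_n with exactly one sink and an alien set F for Q such that P is order-isomorphic to the poset P_{Q^F} associated to the quiver Q^F. -/
/-!
The unique maximal element `z` is the greatest element, so three pairwise incomparable elements
would be a copy of `R1` below `z`. Hence `P` has width at most two and, by Dilworth's theorem, is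
the union of two chains `A` and `B` meeting exactly in `z`. Numbering `A` upwards by `0, …, k`
(ending at `z`) and `B` downwards by `k, …, n - 1` makes every arrow of the one-sink quiver
`0 → 1 → ⋯ → k ← ⋯ ← n - 1` increasing in `P`. The alien arrows are the covering relations of
`P` that are not already paths of this quiver. All arrows of `Q^F` increase, so `Q^F` is acyclic
and no added cover is also a longer path; conversely every relation of `P` is a chain of covers,
each of which is a path of `Q^F`.
-/

section

open Finset Relation

def HasWidthLeTwo (α : Type*) [LE α] : Prop :=
  ∀ a b c : α, IncompRel (· ≤ ·) a b → IncompRel (· ≤ ·) a c → ¬ IncompRel (· ≤ ·) b c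

variable {α : Type*}

theorem List.transGen_of_isChain_cons_append_singleton {r : α → α → Prop} :
    ∀ {a b : α} {l : List α}, List.IsChain r (a :: (l ++ [b])) → TransGen r a b
  | _, _, [], h => .single (List.isChain_pair.1 h)
  | _, _, _ :: _, h => by
    rw [List.cons_append, List.isChain_cons_cons] at h
    exact .head h.1 (transGen_of_isChain_cons_append_singleton h.2)

section TwoChains

def IsUnionOfTwoChains (r : α → α → Prop) (s : Set α) : Prop :=
  ∃ A B : Set α, A ∪ B = s ∧ IsChain r A ∧ IsChain r B

theorem IsChain.forall_rel_of_forall_rel_or_rel {r : α → α → Prop} [Std.Refl r] [IsTrans α r]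
    {s : Set α} (hs : IsChain r s) {a b : α} (ha : a ∈ s) (hab : ¬ r a b)
    (h : ∀ x ∈ s, r x a ∨ r x b) : ∀ x ∈ s, r x a := fun x hx =>
  (hs.total hx ha).elim id fun hax =>
    (h x hx).resolve_right fun hxb => hab (_root_.trans hax hxb)

theorem IsUnionOfTwoChains.exists_forall_rel {r : α → α → Prop} [Std.Refl r] [IsTrans α r]
    {s : Set α} (h : IsUnionOfTwoChains r s) {a b : α} (ha : a ∈ s) (hb : b ∈ s)
    (hab : ¬ r a b) (hba : ¬ r b a) (hs : ∀ x ∈ s, r x a ∨ r x b) :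
    ∃ A B : Set α, A ∪ B = s ∧ IsChain r A ∧ IsChain r B ∧
      (∀ x ∈ A, r x a) ∧ (∀ x ∈ B, r x b) := by
  obtain ⟨A, B, rfl, hA, hB⟩ := h
  have hs' : ∀ x ∈ A ∪ B, r x b ∨ r x a := fun x hx => (hs x hx).symm
  rcases ha with ha | ha <;> rcases hb with hb | hb
  · exact absurd (hA.total ha hb) (by tauto)
  · exact ⟨A, B, rfl, hA, hB,
      hA.forall_rel_of_forall_rel_or_rel ha hab (fun x hx => hs x (.inl hx)),
      hB.forall_rel_of_forall_rel_or_rel hb hba (fun x hx => hs' x (.inr hx))⟩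
  · exact ⟨B, A, Set.union_comm _ _, hB, hA,
      hB.forall_rel_of_forall_rel_or_rel ha hab (fun x hx => hs x (.inr hx)),
      hA.forall_rel_of_forall_rel_or_rel hb hba (fun x hx => hs' x (.inl hx))⟩
  · exact absurd (hB.total ha hb) (by tauto)

variable [PartialOrder α]

theorem IsChain.union_of_le_of_le {s t : Set α} (hs : IsChain (· ≤ ·) s) (ht : IsChain (· ≤ ·) t)
    {a : α} (hsa : ∀ x ∈ s, x ≤ a) (hta : ∀ x ∈ t, a ≤ x) : IsChain (· ≤ ·) (s ∪ t) :=
  isChain_union.2 ⟨hs, ht, fun x hx y hy _ => .inl ((hsa x hx).trans (hta y hy))⟩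

theorem HasWidthLeTwo.isUnionOfTwoChains_of_incompRel (h3 : HasWidthLeTwo α)
    {s : Set α} {a b : α} (ha : a ∈ s) (hb : b ∈ s) (hab : IncompRel (· ≤ ·) a b)
    (hD : IsUnionOfTwoChains (· ≤ ·) {x ∈ s | x ≤ a ∨ x ≤ b})
    (hU : IsUnionOfTwoChains (· ≤ ·) {x ∈ s | a ≤ x ∨ b ≤ x}) :
    IsUnionOfTwoChains (· ≤ ·) s := by
  obtain ⟨DA, DB, hD, hDA, hDB, hDAa, hDBb⟩ :=
    hD.exists_forall_rel ⟨ha, .inl le_rfl⟩ ⟨hb, .inr le_rfl⟩ hab.1 hab.2 fun _ hx => hx.2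
  have hU' : IsUnionOfTwoChains (· ≥ ·) {x ∈ s | a ≤ x ∨ b ≤ x} :=
    let ⟨A, B, h, hA, hB⟩ := hU; ⟨A, B, h, hA.symm, hB.symm⟩
  obtain ⟨UA, UB, hU, hUA, hUB, hUAa, hUBb⟩ :=
    hU'.exists_forall_rel ⟨ha, .inl le_rfl⟩ ⟨hb, .inr le_rfl⟩ hab.2 hab.1 fun _ hx => hx.2
  have hs : {x ∈ s | x ≤ a ∨ x ≤ b} ∪ {x ∈ s | a ≤ x ∨ b ≤ x} = s := by
    refine Set.Subset.antisymm (Set.union_subset (fun _ hx => hx.1) (fun _ hx => hx.1)) ?_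
    intro x hx
    by_contra hxs
    simp only [Set.mem_union, Set.mem_ofPred_eq, hx, true_and, not_or] at hxs
    exact h3 x a b ⟨hxs.1.1, hxs.2.1⟩ ⟨hxs.1.2, hxs.2.2⟩ hab
  refine ⟨DA ∪ UA, DB ∪ UB, ?_, hDA.union_of_le_of_le hUA.symm hDAa hUAa,
    hDB.union_of_le_of_le hUB.symm hDBb hUBb⟩
  rw [Set.union_union_union_comm, hD, hU, hs]

/-- Width-two case of Dilworth's theorem, by Perles' argument: split off a maximal element `t`
and a minimal `b ≤ t`; if the rest is not a chain, it contains incomparable `a₁, a₂`, and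
the elements below and above `{a₁, a₂}` form two strictly smaller sets covering `s`. -/
theorem HasWidthLeTwo.isUnionOfTwoChains (h3 : HasWidthLeTwo α) (s : Finset α) :
    IsUnionOfTwoChains (· ≤ ·) (s : Set α) := by
  classical
  induction s using Finset.strongInduction with | _ s ih => ?_
  rcases s.eq_empty_or_nonempty with rfl | ⟨x, hx⟩
  · exact ⟨∅, ∅, by simp, IsChain.empty, IsChain.empty⟩
  obtain ⟨t, -, ht⟩ := s.exists_le_maximal hx
  obtain ⟨b, hbt, hb⟩ := s.exists_le_minimal ht.prop
  by_cases hch : IsChain (· ≤ ·) ((s : Set α) \ {b, t})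
  · refine ⟨_, {b, t}, Set.sdiff_union_of_subset ?_, hch, IsChain.pair hbt⟩
    simp [Set.insert_subset_iff, hb.prop, ht.prop]
  simp only [IsChain, Set.Pairwise, Set.mem_sdiff, mem_coe, Set.mem_insert_iff,
    Set.mem_singleton_iff, not_forall, not_or] at hch
  obtain ⟨a₁, ⟨ha₁, ha₁b, ha₁t⟩, a₂, ⟨ha₂, ha₂b, ha₂t⟩, -, hinc⟩ := hch
  refine h3.isUnionOfTwoChains_of_incompRel (mem_coe.2 ha₁) (mem_coe.2 ha₂) hinc ?_ ?_
  · have := ih {x ∈ s | x ≤ a₁ ∨ x ≤ a₂} (filter_ssubset.2 ⟨t, ht.prop, ?_⟩)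
    · simpa using this
    rintro (h | h)
    · exact ha₁t (ht.eq_of_le ha₁ h).symm
    · exact ha₂t (ht.eq_of_le ha₂ h).symm
  · have := ih {x ∈ s | a₁ ≤ x ∨ a₂ ≤ x} (filter_ssubset.2 ⟨b, hb.prop, ?_⟩)
    · simpa using this
    rintro (h | h)
    · exact ha₁b (hb.eq_of_le ha₁ h)
    · exact ha₂b (hb.eq_of_le ha₂ h)

end TwoChains

section Peak

variable [PartialOrder α]

theorem le_of_forall_isMax_eq [Finite α] {z : α} (hz : ∀ y : α, IsMax y → y = z) (x : α) :
    x ≤ z := by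
  obtain ⟨y, hxy, hy⟩ := Finite.exists_le_maximal (p := fun _ : α => True) trivial
  exact hz y (maximal_true.1 hy) ▸ hxy

theorem hasWidthLeTwo_of_not_containsR1 {z : α} (hz : ∀ x, x ≤ z)
    (hR1 : ¬ ContainsR1 (fun x y : α => x ≤ y)) : HasWidthLeTwo α := by
  intro a b c hab hac hbc
  exact hR1 ⟨z, a, b, c, fun _ _ => hz _, hab.ne, hac.ne, hbc.ne, hab, hac, hbc,
    ⟨hz a, fun h => hab.2 ((hz b).trans h)⟩, ⟨hz b, fun h => hab.1 ((hz a).trans h)⟩,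
    ⟨hz c, fun h => hac.1 ((hz a).trans h)⟩⟩

structure IsPeakDecomposition (A B : Finset α) (z : α) : Prop where
  le_top : ∀ x, x ≤ z
  isChain_left : IsChain (· ≤ ·) (A : Set α)
  isChain_right : IsChain (· ≤ ·) (B : Set α)
  mem_or_mem : ∀ x, x ∈ A ∨ x ∈ B
  mem_and_mem_iff : ∀ x, x ∈ A ∧ x ∈ B ↔ x = z

namespace IsPeakDecomposition

variable {A B : Finset α} {z : α}

theorem top_mem_left (h : IsPeakDecomposition A B z) : z ∈ A := ((h.mem_and_mem_iff z).2 rfl).1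

theorem top_mem_right (h : IsPeakDecomposition A B z) : z ∈ B := ((h.mem_and_mem_iff z).2 rfl).2

end IsPeakDecomposition

theorem exists_isPeakDecomposition [Fintype α] {z : α} (hz : ∀ x, x ≤ z)
    (h3 : HasWidthLeTwo α) :
    ∃ A B : Finset α, IsPeakDecomposition A B z := by
  classical
  obtain ⟨C, D, hCD, hC, hD⟩ := h3.isUnionOfTwoChains univ
  have hmem : ∀ x, x ∈ C ∨ x ∈ D := fun x => (Set.ext_iff.1 hCD x).2 (by simp)
  refine ⟨insert z C.toFinset, insert z (D \ C).toFinset, ⟨hz, ?_, ?_, ?_, ?_⟩⟩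
  · simpa using hC.insert fun b _ _ => .inr (hz b)
  · simpa using (hD.mono Set.sdiff_subset).insert fun b _ _ => .inr (hz b)
  · intro x
    simp only [mem_insert, Set.mem_toFinset, Set.mem_sdiff]
    have := hmem x
    tauto
  · intro x
    simp only [mem_insert, Set.mem_toFinset, Set.mem_sdiff]
    tauto

end Peak

namespace Finset

variable [PartialOrder α] {s : Finset α} {x y : α}

open scoped Classical in
noncomputable def numBelow (s : Finset α) (x : α) : ℕ := #{y ∈ s | y < x}

theorem numBelow_lt_numBelow (hx : x ∈ s) (hxy : x < y) : s.numBelow x < s.numBelow y := by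
  classical
  refine card_lt_card ⟨fun a ha => ?_, fun h => ?_⟩
  · simp only [mem_filter] at ha ⊢
    exact ⟨ha.1, ha.2.trans hxy⟩
  · simpa using h (mem_filter.2 ⟨hx, hxy⟩)

theorem numBelow_lt_card (hx : x ∈ s) : s.numBelow x < #s := by
  classical
  exact card_lt_card (filter_ssubset.2 ⟨x, hx, lt_irrefl x⟩)

theorem numBelow_eq_card_sub_one (hx : x ∈ s) (h : ∀ y ∈ s, y ≤ x) : s.numBelow x = #s - 1 := by
  classical
  rw [numBelow, ← card_erase_of_mem hx]
  congr 1
  ext y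
  simp only [mem_filter, mem_erase]
  exact ⟨fun h => ⟨h.2.ne, h.1⟩, fun hy => ⟨hy.2, (h y hy.2).lt_of_ne hy.1⟩⟩

end Finset

namespace IsChain

variable [PartialOrder α] {s : Finset α} {x y : α}

theorem lt_of_numBelow_lt (hs : IsChain (· ≤ ·) (s : Set α)) (hx : x ∈ s) (hy : y ∈ s)
    (h : s.numBelow x < s.numBelow y) : x < y :=
  (hs.lt_of_le hx hy fun hxy => h.ne (congrArg _ hxy)).resolve_right fun hyx =>
    (numBelow_lt_numBelow hy hyx).not_gt h

theorem injOn_numBelow (hs : IsChain (· ≤ ·) (s : Set α)) : Set.InjOn s.numBelow s := by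
  intro x hx y hy hxy
  by_contra hne
  rcases hs.lt_of_le hx hy hne with h | h
  · exact (numBelow_lt_numBelow hx h).ne hxy
  · exact (numBelow_lt_numBelow hy h).ne' hxy

end IsChain

section OneSinkQuiver

variable {n k : ℕ}

def oneSinkQuiver (n k : ℕ) : TypeAQuiver n where
  arr u v := ((v : ℕ) = u + 1 ∧ (v : ℕ) ≤ k) ∨ ((u : ℕ) = v + 1 ∧ k ≤ (v : ℕ))
  adjacent _ _ h := h.imp And.left And.left
  exactlyOne _ _ _ := by omega

theorem isSinkQ_oneSinkQuiver_iff (hk : k < n) (v : Fin n) :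
    IsSinkQ (oneSinkQuiver n k) v ↔ (v : ℕ) = k := by
  refine ⟨fun hv => by_contra fun hvk => ?_, fun hv w hw => by rcases hw with hw | hw <;> omega⟩
  rcases Nat.lt_or_gt_of_ne hvk with h | h
  · exact hv ⟨v + 1, by omega⟩ (.inl ⟨rfl, h⟩)
  · exact hv ⟨v - 1, by omega⟩ (.inr ⟨by simp; omega, by simp; omega⟩)

theorem eq_zero_or_eq_of_isSourceQ_oneSinkQuiver {v : Fin n}
    (hv : IsSourceQ (oneSinkQuiver n k) v) : (v : ℕ) = 0 ∨ (v : ℕ) = n - 1 := by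
  by_contra! h
  rcases le_or_gt (v : ℕ) k with hvk | hvk
  · exact hv ⟨v - 1, by omega⟩ (.inl ⟨by simp; omega, hvk⟩)
  · exact hv ⟨v + 1, by omega⟩ (.inr ⟨rfl, by omega⟩)

theorem mem_suppI_oneSinkQuiver (hk : k < n) (v : Fin n) :
    v ∈ SuppI (oneSinkQuiver n k) ⟨k, hk⟩ := by
  induction hd : (v : ℕ) - k + (k - v) using Nat.strong_induction_on generalizing v with
  | _ d ih =>
  rcases lt_trichotomy (v : ℕ) k with h | h | h
  · exact .head (b := ⟨v + 1, by omega⟩) (.inl ⟨rfl, by simp; omega⟩)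
      (ih _ (by simp; omega) _ rfl)
  · exact (Fin.ext h : v = ⟨k, hk⟩) ▸ .refl
  · exact .head (b := ⟨v - 1, by omega⟩) (.inr ⟨by simp; omega, by simp; omega⟩)
      (ih _ (by simp; omega) _ rfl)

end OneSinkQuiver

section PeakLabel

variable [PartialOrder α] [Fintype α] {A B : Finset α} {z x y : α}

open scoped Classical in
/-- Positions `0, …, #A - 1` run up the chain `A` to the top, the remaining ones back down `B`. -/
noncomputable def peakLabel (A B : Finset α) (x : α) : ℕ :=
  if x ∈ A then A.numBelow x else Fintype.card α - 1 - B.numBelow x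

namespace IsPeakDecomposition

theorem card_eq (h : IsPeakDecomposition A B z) :
    Fintype.card α = (#A - 1) + (#B - 1) + 1 := by
  classical
  have hunion : A ∪ B = univ := eq_univ_of_forall fun x => mem_union.2 (h.mem_or_mem x)
  have hinter : A ∩ B = {z} := ext fun x => by simp [h.mem_and_mem_iff]
  have := card_union_add_card_inter A B
  rw [hunion, hinter, card_univ, card_singleton] at this
  have := card_pos.2 ⟨z, h.top_mem_left⟩
  have := card_pos.2 ⟨z, h.top_mem_right⟩
  omega

theorem peakLabel_of_mem_left (hx : x ∈ A) : peakLabel A B x = A.numBelow x := if_pos hx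

theorem peakLabel_of_mem_right (h : IsPeakDecomposition A B z) (hx : x ∈ B) :
    peakLabel A B x = Fintype.card α - 1 - B.numBelow x := by
  by_cases hxA : x ∈ A
  · obtain rfl := (h.mem_and_mem_iff x).1 ⟨hxA, hx⟩
    rw [peakLabel_of_mem_left hxA,
      numBelow_eq_card_sub_one hxA fun y _ => h.le_top y,
      numBelow_eq_card_sub_one hx fun y _ => h.le_top y]
    have := h.card_eq
    omega
  · exact if_neg hxA

theorem peakLabel_le_iff (h : IsPeakDecomposition A B z) :
    peakLabel A B x ≤ #A - 1 ↔ x ∈ A := by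
  refine ⟨fun hx => by_contra fun hxA => ?_, fun hx => ?_⟩
  · have hxB := (h.mem_or_mem x).resolve_left hxA
    have hxz : x < z := (h.le_top x).lt_of_ne fun hxz => hxA (hxz ▸ h.top_mem_left)
    have := numBelow_lt_numBelow hxB hxz
    rw [numBelow_eq_card_sub_one h.top_mem_right fun y _ => h.le_top y] at this
    rw [h.peakLabel_of_mem_right hxB] at hx
    have := h.card_eq
    omega
  · have := numBelow_lt_card hx
    rw [peakLabel_of_mem_left hx]
    omega

theorem le_peakLabel_iff (h : IsPeakDecomposition A B z) :
    #A - 1 ≤ peakLabel A B x ↔ x ∈ B := by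
  refine ⟨fun hx => by_contra fun hxB => ?_, fun hx => ?_⟩
  · have hxA := (h.mem_or_mem x).resolve_right hxB
    have hxz : x < z := (h.le_top x).lt_of_ne fun hxz => hxB (hxz ▸ h.top_mem_right)
    have := numBelow_lt_numBelow hxA hxz
    rw [numBelow_eq_card_sub_one h.top_mem_left fun y _ => h.le_top y] at this
    rw [peakLabel_of_mem_left hxA] at hx
    omega
  · have := numBelow_lt_card hx
    have := h.card_eq
    rw [h.peakLabel_of_mem_right hx]
    omega

theorem peakLabel_lt_card (h : IsPeakDecomposition A B z) :
    peakLabel A B x < Fintype.card α := by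
  have := h.card_eq
  rcases h.mem_or_mem x with hx | hx
  · have := h.peakLabel_le_iff.2 hx
    omega
  · have := numBelow_lt_card hx
    rw [h.peakLabel_of_mem_right hx]
    omega

theorem peakLabel_injective (h : IsPeakDecomposition A B z) :
    Function.Injective (peakLabel A B) := by
  intro x y hxy
  by_cases hx : peakLabel A B x ≤ #A - 1
  · have hxA := h.peakLabel_le_iff.1 hx
    have hyA := h.peakLabel_le_iff.1 (hxy ▸ hx)
    rw [peakLabel_of_mem_left hxA, peakLabel_of_mem_left hyA] at hxy
    exact h.isChain_left.injOn_numBelow hxA hyA hxy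
  · have hxB := h.le_peakLabel_iff.1 (le_of_not_ge hx)
    have hyB := h.le_peakLabel_iff.1 (hxy ▸ le_of_not_ge hx)
    have := numBelow_lt_card hxB
    have := numBelow_lt_card hyB
    have := h.card_eq
    rw [h.peakLabel_of_mem_right hxB, h.peakLabel_of_mem_right hyB] at hxy
    exact h.isChain_right.injOn_numBelow hxB hyB (by omega)

theorem lt_of_peakLabel_lt_of_le (h : IsPeakDecomposition A B z)
    (hxy : peakLabel A B x < peakLabel A B y) (hy : peakLabel A B y ≤ #A - 1) : x < y := by
  have hyA := h.peakLabel_le_iff.1 hy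
  have hxA := h.peakLabel_le_iff.1 (hxy.le.trans hy)
  rw [peakLabel_of_mem_left hxA, peakLabel_of_mem_left hyA] at hxy
  exact h.isChain_left.lt_of_numBelow_lt hxA hyA hxy

theorem lt_of_peakLabel_lt_of_ge (h : IsPeakDecomposition A B z)
    (hx : #A - 1 ≤ peakLabel A B x) (hxy : peakLabel A B x < peakLabel A B y) : y < x := by
  have hxB := h.le_peakLabel_iff.1 hx
  have hyB := h.le_peakLabel_iff.1 (hx.trans hxy.le)
  have := numBelow_lt_card hxB
  have := h.card_eq
  rw [h.peakLabel_of_mem_right hxB, h.peakLabel_of_mem_right hyB] at hxy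
  exact h.isChain_right.lt_of_numBelow_lt hyB hxB (by omega)

theorem exists_oneSinkQuiver_labeling (h : IsPeakDecomposition A B z) :
    ∃ k < Fintype.card α, ∃ e : α ≃ Fin (Fintype.card α),
      ∀ u v, (oneSinkQuiver _ k).arr u v → e.symm u < e.symm v := by
  let e : α ≃ Fin (Fintype.card α) :=
    Equiv.ofBijective (fun x => ⟨peakLabel A B x, h.peakLabel_lt_card⟩)
      ((Fintype.bijective_iff_injective_and_card _).2
        ⟨fun _ _ hxy => h.peakLabel_injective (congrArg Fin.val hxy), (Fintype.card_fin _).symm⟩)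
  have he : ∀ u, peakLabel A B (e.symm u) = u := fun u =>
    congrArg Fin.val (e.apply_symm_apply u)
  refine ⟨#A - 1, ?_, e, ?_⟩
  · have := h.card_eq
    omega
  · rintro u v (⟨huv, hv⟩ | ⟨huv, hv⟩)
    · exact h.lt_of_peakLabel_lt_of_le (by rw [he, he]; omega) (by rw [he]; exact hv)
    · exact h.lt_of_peakLabel_lt_of_ge (by rw [he]; exact hv) (by rw [he, he]; omega)

end IsPeakDecomposition

end PeakLabel

section Realization

variable [PartialOrder α] {n : ℕ}

def missingCovers (Q : TypeAQuiver n) (e : α ≃ Fin n) : Set (Fin n × Fin n) :=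
  {p | e.symm p.1 ⋖ e.symm p.2 ∧ ¬ ReflTransGen Q.arr p.1 p.2}

variable {Q : TypeAQuiver n} {e : α ≃ Fin n}

theorem lt_of_transGen_missingCovers (hQ : ∀ u v, Q.arr u v → e.symm u < e.symm v)
    {u v : Fin n} (h : TransGen (QFarr Q (missingCovers Q e)) u v) : e.symm u < e.symm v := by
  have step : ∀ {u v}, QFarr Q (missingCovers Q e) u v → e.symm u < e.symm v :=
    fun h => h.elim (hQ _ _) fun h => h.1.lt
  induction h with
  | single h => exact step h
  | tail _ h ih => exact ih.trans (step h)

theorem leQF_missingCovers_iff (hQ : ∀ u v, Q.arr u v → e.symm u < e.symm v) {x y : α} :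
    leQF Q (missingCovers Q e) (e x) (e y) ↔ x ≤ y := by
  classical
  let _ := Fintype.ofEquiv (Fin n) e.symm
  let _ : LocallyFiniteOrder α := Fintype.toLocallyFiniteOrder
  constructor
  · intro h
    rcases reflTransGen_iff_eq_or_transGen.1 h with h | h
    · exact (e.injective h).ge
    · simpa using (lt_of_transGen_missingCovers hQ h).le
  · intro h
    refine ReflTransGen.lift' e (fun a b hab => ?_) _ _ (le_iff_reflTransGen_covBy.1 h)
    by_cases hq : ReflTransGen Q.arr (e a) (e b)
    · exact ReflTransGen.mono (fun _ _ => Or.inl) _ _ hq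
    · exact .single (.inr ⟨by simpa using hab, hq⟩)

theorem isAlienSet_oneSinkQuiver_missingCovers {k : ℕ} (hk : k < n)
    (hQ : ∀ u v, (oneSinkQuiver n k).arr u v → e.symm u < e.symm v) :
    IsAlienSet (oneSinkQuiver n k) (missingCovers (oneSinkQuiver n k) e) where
  sameSupp _ _ := ⟨⟨k, hk⟩, (isSinkQ_oneSinkQuiver_iff hk _).2 rfl,
    mem_suppI_oneSinkQuiver hk _, mem_suppI_oneSinkQuiver hk _⟩
  targetNotSource _ _ := eq_zero_or_eq_of_isSourceQ_oneSinkQuiver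
  uniquePath := by
    rintro ⟨u, v⟩ ⟨hcov, -⟩ (_ | ⟨w, l⟩) hl
    · rfl
    · change List.IsChain _ (u :: w :: (l ++ [v])) at hl
      rw [List.isChain_cons_cons] at hl
      have hw := List.transGen_of_isChain_cons_append_singleton hl.2
      exact (hcov.2 (lt_of_transGen_missingCovers hQ (.single hl.1))
        (lt_of_transGen_missingCovers hQ hw)).elim
  acyclic _ h := (lt_of_transGen_missingCovers hQ h).false

end Realization

end

/-- A finite poset with `n` elements, exactly one maximal element,
and not containing `R1` as a peak-subposet is order-isomorphic to the poset
`P_{Q^F}` for some quiver `Q` of type `A_n` with exactly one sink and an alien set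
`F` for `Q`. -/
theorem one_peak_realization {P : Type*} [Fintype P] [PartialOrder P] {n : ℕ}
    (hcard : Fintype.card P = n)
    (hone : ∃! z : P, RIsMax (fun x y : P => x ≤ y) z)
    (hR1 : ¬ ContainsR1 (fun x y : P => x ≤ y)) :
    ∃ Q : TypeAQuiver n, (∃! z : Fin n, IsSinkQ Q z) ∧
      ∃ F : Set (Fin n × Fin n), IsAlienSet Q F ∧
        ∃ e : P ≃ Fin n, ∀ x y : P, x ≤ y ↔ leQF Q F (e x) (e y) := by
  obtain ⟨z, -, hz⟩ := hone
  have htop : ∀ x, x ≤ z := le_of_forall_isMax_eq hz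
  obtain ⟨A, B, hAB⟩ := exists_isPeakDecomposition htop (hasWidthLeTwo_of_not_containsR1 htop hR1)
  subst hcard
  obtain ⟨k, hk, e, he⟩ := hAB.exists_oneSinkQuiver_labeling
  exact ⟨oneSinkQuiver _ k,
    ⟨⟨k, hk⟩, (isSinkQ_oneSinkQuiver_iff hk _).2 rfl,
      fun v hv => Fin.ext ((isSinkQ_oneSinkQuiver_iff hk v).1 hv)⟩,
    missingCovers _ e, isAlienSet_oneSinkQuiver_missingCovers hk he,
    e, fun _ _ => (leQF_missingCovers_iff he).symm⟩
end
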